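/- arXiv:1112.3920 — 9 statements merged into one kernel-verified Lean document; each statement's English description precedes it below -/
import Mathlib

section
/- If D = (d_1, ..., d_n) is a sequence of integers with d_1 ≥ d_2 ≥ ... ≥ d_n ≥ 1, the sum of the d_i is even, and n ≥ d_1², then D is graphic, i.e., there exists a simple graph on n vertices whose degree sequence is D. -/
/-- The multiset of vertex degrees of a finite simple graph. -/
noncomputable def degreeMultiset {V : Type} [Fintype V] (G : SimpleGraph V) : Multiset ℕ :=
  Finset.univ.val.map fun v => (G.neighborSet v).ncard

/-- A multiset of natural numbers is graphic if it is the degree multiset of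
some finite simple graph. -/
def IsGraphic (D : Multiset ℕ) : Prop :=
  ∃ (n : ℕ) (G : SimpleGraph (Fin n)), degreeMultiset G = D

/-- The Rao order: some realization of `D₁` is an induced subgraph of some
realization of `D₂`. -/
def RaoLE (D₁ D₂ : Multiset ℕ) : Prop :=
  ∃ (m n : ℕ) (G : SimpleGraph (Fin m)) (H : SimpleGraph (Fin n)) (f : Fin m ↪ Fin n),
    degreeMultiset G = D₁ ∧ degreeMultiset H = D₂ ∧
    ∀ u v : Fin m, G.Adj u v ↔ H.Adj (f u) (f v)


set_option linter.unusedSectionVars false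
open Finset

section Helpers

variable {V : Type} [Fintype V] [DecidableEq V]

/-- Add an edge between `a` and `b`. -/
def addE (G : SimpleGraph V) (a b : V) : SimpleGraph V where
  Adj p q := G.Adj p q ∨ (p ≠ q ∧ ((p = a ∧ q = b) ∨ (p = b ∧ q = a)))
  symm := by
    refine ⟨?_⟩
    intro p q h
    rcases h with h | ⟨hne, h⟩
    · exact Or.inl h.symm
    · exact Or.inr ⟨hne.symm, by tauto⟩
  loopless := by
    refine ⟨?_⟩
    intro p h
    rcases h with h | ⟨hne, _⟩
    · exact G.loopless.irrefl p h
    · exact hne rfl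

/-- Delete the edge between `a` and `b`. -/
def delE (G : SimpleGraph V) (a b : V) : SimpleGraph V where
  Adj p q := G.Adj p q ∧ ¬((p = a ∧ q = b) ∨ (p = b ∧ q = a))
  symm := by
    refine ⟨?_⟩
    intro p q h
    exact ⟨h.1.symm, by tauto⟩
  loopless := by
    refine ⟨?_⟩
    intro p h
    exact G.loopless.irrefl p h.1

lemma addE_adj (G : SimpleGraph V) (a b p q : V) :
    (addE G a b).Adj p q ↔ G.Adj p q ∨ (p ≠ q ∧ ((p = a ∧ q = b) ∨ (p = b ∧ q = a))) :=
  Iff.rfl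

lemma delE_adj (G : SimpleGraph V) (a b p q : V) :
    (delE G a b).Adj p q ↔ G.Adj p q ∧ ¬((p = a ∧ q = b) ∨ (p = b ∧ q = a)) :=
  Iff.rfl


lemma addE_nbr (G : SimpleGraph V) (a b : V) (hab : a ≠ b) (w : V) :
    (addE G a b).neighborSet w =
      if w = a then insert b (G.neighborSet w)
      else if w = b then insert a (G.neighborSet w)
      else G.neighborSet w := by
  ext z
  by_cases hwa : w = a
  · subst hwa
    simp only [if_pos rfl, SimpleGraph.mem_neighborSet, Set.mem_insert_iff]
    rw [addE_adj]
    constructor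
    · rintro (h | ⟨hne, ⟨h1, h2⟩ | ⟨h1, h2⟩⟩)
      · exact Or.inr h
      · exact Or.inl h2
      · exact absurd h1 hab
    · rintro (rfl | h)
      · exact Or.inr ⟨hab, Or.inl ⟨rfl, rfl⟩⟩
      · exact Or.inl h
  · by_cases hwb : w = b
    · subst hwb
      simp only [if_neg hwa, if_pos rfl, SimpleGraph.mem_neighborSet, Set.mem_insert_iff]
      rw [addE_adj]
      constructor
      · rintro (h | ⟨hne, ⟨h1, h2⟩ | ⟨h1, h2⟩⟩)
        · exact Or.inr h
        · exact absurd h1 (Ne.symm hab)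
        · exact Or.inl h2
      · rintro (rfl | h)
        · exact Or.inr ⟨Ne.symm hab, Or.inr ⟨rfl, rfl⟩⟩
        · exact Or.inl h
    · simp only [if_neg hwa, if_neg hwb, SimpleGraph.mem_neighborSet]
      rw [addE_adj]
      constructor
      · rintro (h | ⟨hne, ⟨h1, h2⟩ | ⟨h1, h2⟩⟩)
        · exact h
        · exact absurd h1 hwa
        · exact absurd h1 hwb
      · exact fun h => Or.inl h


lemma delE_nbr (G : SimpleGraph V) (a b : V) (w : V) :
    (delE G a b).neighborSet w =
      if w = a then (G.neighborSet w) \ {b}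
      else if w = b then (G.neighborSet w) \ {a}
      else G.neighborSet w := by
  ext z
  by_cases hwa : w = a
  · subst hwa
    simp only [if_pos rfl, SimpleGraph.mem_neighborSet, Set.mem_diff, Set.mem_singleton_iff]
    rw [delE_adj]
    constructor
    · rintro ⟨h, hn⟩
      exact ⟨h, fun hz => hn (Or.inl ⟨rfl, hz⟩)⟩
    · rintro ⟨h, hz⟩
      refine ⟨h, ?_⟩
      rintro (⟨_, rfl⟩ | ⟨h1, rfl⟩)
      · exact hz rfl
      · exact G.loopless.irrefl _ (h1 ▸ h)
  · by_cases hwb : w = b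
    · subst hwb
      simp only [if_neg hwa, if_pos rfl, SimpleGraph.mem_neighborSet, Set.mem_diff,
        Set.mem_singleton_iff]
      rw [delE_adj]
      constructor
      · rintro ⟨h, hn⟩
        exact ⟨h, fun hz => hn (Or.inr ⟨rfl, hz⟩)⟩
      · rintro ⟨h, hz⟩
        refine ⟨h, ?_⟩
        rintro (⟨h1, rfl⟩ | ⟨_, rfl⟩)
        · exact G.loopless.irrefl _ (h1 ▸ h)
        · exact hz rfl
    · simp only [if_neg hwa, if_neg hwb, SimpleGraph.mem_neighborSet]
      rw [delE_adj]
      constructor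
      · exact fun h => h.1
      · intro h
        refine ⟨h, ?_⟩
        rintro (⟨rfl, _⟩ | ⟨rfl, _⟩)
        · exact hwa rfl
        · exact hwb rfl


lemma addE_deg (G : SimpleGraph V) (a b : V) (hab : a ≠ b) (hG : ¬ G.Adj a b) (w : V) :
    ((addE G a b).neighborSet w).ncard
      = (G.neighborSet w).ncard + (if w = a ∨ w = b then 1 else 0) := by
  rw [addE_nbr G a b hab w]
  by_cases hwa : w = a
  · subst hwa
    rw [if_pos rfl, Set.ncard_insert_of_notMem (by simpa using hG) (Set.toFinite _)]
    simp
  · by_cases hwb : w = b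
    · subst hwb
      rw [if_neg hwa, if_pos rfl,
        Set.ncard_insert_of_notMem (by simpa using fun h => hG h.symm) (Set.toFinite _)]
      simp [hwa]
    · rw [if_neg hwa, if_neg hwb]
      simp [hwa, hwb]


lemma delE_deg (G : SimpleGraph V) (a b : V) (hG : G.Adj a b) (w : V) :
    ((delE G a b).neighborSet w).ncard + (if w = a ∨ w = b then 1 else 0)
      = (G.neighborSet w).ncard := by
  rw [delE_nbr G a b w]
  by_cases hwa : w = a
  · subst hwa
    rw [if_pos rfl]
    simp only [true_or, if_pos]
    exact Set.ncard_diff_singleton_add_one (by simpa using hG) (Set.toFinite _)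
  · by_cases hwb : w = b
    · subst hwb
      rw [if_neg hwa, if_pos rfl]
      simp only [or_true, if_pos]
      exact Set.ncard_diff_singleton_add_one (by simpa using hG.symm) (Set.toFinite _)
    · rw [if_neg hwa, if_neg hwb]
      simp [hwa, hwb]


lemma ncard_neighborSet_eq_degree (G : SimpleGraph V) [DecidableRel G.Adj] (v : V) :
    (G.neighborSet v).ncard = G.degree v := by
  rw [← SimpleGraph.card_neighborFinset_eq_degree, SimpleGraph.neighborFinset_def,
    Set.ncard_eq_toFinset_card']

end Helpers
section Swap

variable {V : Type} [Fintype V] [DecidableEq V]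

lemma swap_exists (G : SimpleGraph V) [DecidableRel G.Adj] (D : ℕ)
    (u v : V) (huv : G.Adj u v) (hu : G.degree u < D) (hv : G.degree v < D)
    (hmax : ∀ w, G.degree w ≤ D)
    (hpos : D ^ 2 ≤ (Finset.univ.filter (fun w => 0 < G.degree w)).card) :
    ∃ x y, G.Adj x y ∧ ¬G.Adj u x ∧ ¬G.Adj v y ∧
      x ≠ u ∧ x ≠ v ∧ y ≠ u ∧ y ≠ v := by
  by_contra hcon
  push_neg at hcon
  -- key claim: any neighbor of a vertex not dominated by u,v is a common neighbor of u,v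
  have claim : ∀ z w, G.Adj z w → ¬G.Adj u z → ¬G.Adj v z → z ≠ u → z ≠ v →
      G.Adj u w ∧ G.Adj v w := by
    intro z w hzw huz hvz hzu hzv
    have hwu : w ≠ u := fun h => huz (h ▸ hzw).symm
    have hwv : w ≠ v := fun h => hvz (h ▸ hzw).symm
    constructor
    · by_contra huw
      exact hzv (hcon w z hzw.symm huw hvz hwu hwv hzu)
    · by_contra hvw
      exact hwv (hcon z w hzw huz hvw hzu hzv hwu)
  set C : Finset V := G.neighborFinset u ∩ G.neighborFinset v with hC
  set Pos : Finset V := Finset.univ.filter (fun w => 0 < G.degree w) with hPos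
  set Zpos : Finset V := Pos.filter
    (fun z => ¬G.Adj u z ∧ ¬G.Adj v z ∧ z ≠ u ∧ z ≠ v) with hZpos
  -- bound 1 : Pos.card ≤ Zpos.card + deg u + deg v
  have hb1 : Pos.card ≤ Zpos.card + (G.degree u + G.degree v) := by
    have hsub : Pos ⊆ Zpos ∪ (G.neighborFinset u ∪ G.neighborFinset v) := by
      intro z hz
      by_cases hzZ : z ∈ Zpos
      · exact Finset.mem_union_left _ hzZ
      · rw [hZpos, Finset.mem_filter] at hzZ
        push_neg at hzZ
        rcases Decidable.em (G.Adj u z) with h | h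
        · exact Finset.mem_union_right _ (Finset.mem_union_left _ (by simpa using h))
        rcases Decidable.em (G.Adj v z) with h' | h'
        · exact Finset.mem_union_right _ (Finset.mem_union_right _ (by simpa using h'))
        rcases Decidable.em (z = u) with h'' | h''
        · subst h''
          exact Finset.mem_union_right _ (Finset.mem_union_right _ (by simpa using huv.symm))
        · have : z = v := hzZ hz h h' h''
          subst this
          exact Finset.mem_union_right _ (Finset.mem_union_left _ (by simpa using huv))
    calc Pos.card ≤ (Zpos ∪ (G.neighborFinset u ∪ G.neighborFinset v)).card :=
          Finset.card_le_card hsub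
      _ ≤ Zpos.card + (G.neighborFinset u ∪ G.neighborFinset v).card :=
          Finset.card_union_le _ _
      _ ≤ Zpos.card + ((G.neighborFinset u).card + (G.neighborFinset v).card) := by
          exact Nat.add_le_add_left (Finset.card_union_le _ _) _
      _ = Zpos.card + (G.degree u + G.degree v) := by
          rw [SimpleGraph.card_neighborFinset_eq_degree,
            SimpleGraph.card_neighborFinset_eq_degree]
  -- bound 2 : Zpos.card ≤ C.card * D
  have hb2 : Zpos.card ≤ C.card * D := by
    have hsub : Zpos ⊆ C.biUnion (fun c => G.neighborFinset c) := by
      intro z hz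
      rw [hZpos, Finset.mem_filter] at hz
      obtain ⟨hzP, huz, hvz, hzu, hzv⟩ := hz
      rw [hPos, Finset.mem_filter] at hzP
      obtain ⟨-, hdz⟩ := hzP
      rw [← SimpleGraph.card_neighborFinset_eq_degree, Finset.card_pos] at hdz
      obtain ⟨w, hw⟩ := hdz
      rw [SimpleGraph.mem_neighborFinset] at hw
      obtain ⟨h1, h2⟩ := claim z w hw huz hvz hzu hzv
      refine Finset.mem_biUnion.2 ⟨w, ?_, ?_⟩
      · rw [hC, Finset.mem_inter, SimpleGraph.mem_neighborFinset,
          SimpleGraph.mem_neighborFinset]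
        exact ⟨h1, h2⟩
      · rw [SimpleGraph.mem_neighborFinset]
        exact hw.symm
    calc Zpos.card ≤ (C.biUnion (fun c => G.neighborFinset c)).card :=
          Finset.card_le_card hsub
      _ ≤ ∑ c ∈ C, (G.neighborFinset c).card := Finset.card_biUnion_le
      _ ≤ ∑ _c ∈ C, D := Finset.sum_le_sum (fun c _ => by
          rw [SimpleGraph.card_neighborFinset_eq_degree]; exact hmax c)
      _ = C.card * D := by rw [Finset.sum_const, smul_eq_mul]
  -- bound 3 : C.card + 1 ≤ deg v
  have hb3 : C.card + 1 ≤ G.degree v := by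
    have hsub : C ⊆ (G.neighborFinset v).erase u := by
      intro c hc
      rw [hC, Finset.mem_inter] at hc
      refine Finset.mem_erase.2 ⟨?_, hc.2⟩
      intro hcu
      have h1 : G.Adj u c := (SimpleGraph.mem_neighborFinset G u c).1 hc.1
      exact G.loopless.irrefl u (hcu ▸ h1)
    have := Finset.card_le_card hsub
    rw [Finset.card_erase_of_mem (by rw [SimpleGraph.mem_neighborFinset]; exact huv.symm),
      SimpleGraph.card_neighborFinset_eq_degree] at this
    have hdv : 1 ≤ G.degree v := by
      rw [← SimpleGraph.card_neighborFinset_eq_degree]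
      exact Finset.card_pos.2 ⟨u, by rw [SimpleGraph.mem_neighborFinset]; exact huv.symm⟩
    omega
  -- final arithmetic
  have hb5 : (C.card + 2) * D ≤ D * D :=
    Nat.mul_le_mul_right D (by omega)
  rw [pow_two] at hpos
  have : C.card * D + 2 * D ≤ D * D := by linarith [hb5]
  omega

end Swap

section Prefix

lemma prefix_char (n : ℕ) (P : ℕ → Prop) [DecidablePred P]
    (hdc : ∀ a b, a ≤ b → b < n → P b → P a) :
    ∀ k, k < n → (P k ↔ k < ((Finset.range n).filter P).card) := by
  intro k hk
  constructor
  · intro hP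
    have hsub : Finset.range (k + 1) ⊆ (Finset.range n).filter P := by
      intro l hl
      rw [Finset.mem_range] at hl
      refine Finset.mem_filter.2 ⟨Finset.mem_range.2 (by omega), ?_⟩
      exact hdc l k (by omega) hk hP
    have := Finset.card_le_card hsub
    rw [Finset.card_range] at this
    omega
  · intro hlt
    by_contra hnP
    have hsub : (Finset.range n).filter P ⊆ Finset.range k := by
      intro l hl
      rw [Finset.mem_filter, Finset.mem_range] at hl
      rw [Finset.mem_range]
      by_contra hge
      exact hnP (hdc k l (by omega) hl.1 hl.2)
    have := Finset.card_le_card hsub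
    rw [Finset.card_range] at this
    omega

lemma sum_two_split (n i j : ℕ) (hij : i ≠ j) (hi : i < n) (hj : j < n) (f : ℕ → ℕ) :
    ∑ k ∈ Finset.range n, f k
      = f i + f j + ∑ k ∈ ((Finset.range n).erase i).erase j, f k := by
  have hi' : i ∈ Finset.range n := Finset.mem_range.2 hi
  have hj' : j ∈ (Finset.range n).erase i :=
    Finset.mem_erase.2 ⟨fun h => hij (h.symm), Finset.mem_range.2 hj⟩
  rw [← Finset.sum_erase_add _ _ hi', ← Finset.sum_erase_add _ _ hj']
  ring

lemma card_filter_val (n : ℕ) (Q : ℕ → Prop) [DecidablePred Q] :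
    (Finset.univ.filter (fun w : Fin n => Q w.val)).card
      = ((Finset.range n).filter Q).card := by
  have : ((Finset.range n).filter Q)
      = (Finset.univ.filter (fun w : Fin n => Q w.val)).image Fin.val := by
    ext k
    simp only [Finset.mem_filter, Finset.mem_range, Finset.mem_image, Finset.mem_univ,
      true_and]
    constructor
    · rintro ⟨hk, hQ⟩
      exact ⟨⟨k, hk⟩, hQ, rfl⟩
    · rintro ⟨w, hQ, rfl⟩
      exact ⟨w.isLt, hQ⟩
  rw [this, Finset.card_image_of_injective _ Fin.val_injective]

end Prefix
set_option maxHeartbeats 1600000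
section Main

/-- Key auxiliary result: pointwise realization of a nonincreasing degree sequence
(zeros allowed), with invariant `(d 0)^2 ≤ #positives`. -/
lemma aux_graphic (n : ℕ) (N : ℕ) (d : ℕ → ℕ)
    (hsum : ∑ k ∈ Finset.range n, d k = N)
    (hmono : ∀ a b, a ≤ b → b < n → d b ≤ d a)
    (heven : Even N)
    (hinv : (d 0) ^ 2 ≤ ((Finset.range n).filter (fun k => 0 < d k)).card) :
    ∃ G : SimpleGraph (Fin n), ∀ w : Fin n, (G.neighborSet w).ncard = d w.val := by
  induction N using Nat.strong_induction_on generalizing d with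
  | _ N IH =>
  rcases Nat.eq_zero_or_pos N with hN0 | hNpos
  · subst hN0
    refine ⟨⊥, fun w => ?_⟩
    rw [Finset.sum_eq_zero_iff] at hsum
    have hw0 : d w.val = 0 := hsum w.val (Finset.mem_range.2 w.isLt)
    have hb : (⊥ : SimpleGraph (Fin n)).neighborSet w = ∅ := rfl
    rw [hw0, hb, Set.ncard_empty]
  · -- Step case.
    set D := d 0 with hD
    set p := ((Finset.range n).filter (fun k => 0 < d k)).card with hp
    have hpchar : ∀ k, k < n → (0 < d k ↔ k < p) :=
      prefix_char n _ (fun a b hab hbn h => lt_of_lt_of_le h (hmono a b hab hbn))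
    obtain ⟨k0, hk0n, hk0⟩ : ∃ k, k < n ∧ 0 < d k := by
      by_contra h
      push_neg at h
      have hz : ∑ k ∈ Finset.range n, d k = 0 :=
        Finset.sum_eq_zero (fun k hk => by
          have := h k (Finset.mem_range.1 hk); omega)
      omega
    have hn : 0 < n := lt_of_le_of_lt (Nat.zero_le k0) hk0n
    have hppos : 0 < p := by
      have := (hpchar k0 hk0n).1 hk0; omega
    have hpn : p ≤ n := by
      have := Finset.card_filter_le (Finset.range n) (fun k => 0 < d k)
      rw [Finset.card_range] at this
      omega
    have hD1 : 1 ≤ D := le_trans hk0 (hmono 0 k0 (Nat.zero_le _) hk0n)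
    have hdpos : ∀ k, k < p → 1 ≤ d k := fun k hk =>
      (hpchar k (lt_of_lt_of_le hk hpn)).2 hk
    have hdzero : ∀ k, p ≤ k → k < n → d k = 0 := by
      intro k hk hkn
      by_contra h
      have := (hpchar k hkn).1 (by omega)
      omega
    have hdleD : ∀ k, k < n → d k ≤ D := fun k hk => hmono 0 k (Nat.zero_le _) hk
    set M := ((Finset.range n).filter (fun k => d k = D)).card with hM
    have hMchar : ∀ k, k < n → (d k = D ↔ k < M) :=
      prefix_char n _ (by
        intro a b hab hbn hb
        have h1 := hmono a b hab hbn
        have h2 := hdleD a (lt_of_le_of_lt hab hbn)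
        omega)
    have hMn : M ≤ n := by
      have := Finset.card_filter_le (Finset.range n) (fun k => d k = D)
      rw [Finset.card_range] at this
      omega
    have hM1 : 1 ≤ M := by
      have := (hMchar 0 hn).1 rfl; omega
    have hMp : M ≤ p := by
      by_contra h
      push_neg at h
      have h1 : d p = D := (hMchar p (lt_of_lt_of_le h hMn)).2 h
      have := hdzero p (le_refl p) (lt_of_lt_of_le h hMn)
      omega
    -- choose the two indices to decrement
    obtain ⟨i, j, hij, hjn, hdi1, hdj1, hmono', hinv'⟩ :
        ∃ i j : ℕ, i < j ∧ j < n ∧ 1 ≤ d i ∧ 1 ≤ d j ∧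
          (∀ a b, a ≤ b → b < n →
            (if b = i ∨ b = j then d b - 1 else d b) ≤
              (if a = i ∨ a = j then d a - 1 else d a)) ∧
          ((if (0:ℕ) = i ∨ (0:ℕ) = j then d 0 - 1 else d 0) ^ 2 ≤
            ((Finset.range n).filter
              (fun k => 0 < (if k = i ∨ k = j then d k - 1 else d k))).card) := by
      by_cases hD2 : D = 1
      · -- Case A : all positive degrees are 1; cut the last two.
        have hNp : N = p := by
          have h1 : ∑ k ∈ (Finset.range n).filter (fun k => 0 < d k), d k
              = ∑ k ∈ Finset.range n, d k :=
            Finset.sum_filter_of_ne (fun x _ hx => by omega)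
          have h2 : ∑ k ∈ (Finset.range n).filter (fun k => 0 < d k), d k
              = ∑ _k ∈ (Finset.range n).filter (fun k => 0 < d k), 1 := by
            refine Finset.sum_congr rfl (fun k hk => ?_)
            rw [Finset.mem_filter, Finset.mem_range] at hk
            have := hdleD k hk.1
            omega
          rw [h2, Finset.sum_const, smul_eq_mul, mul_one] at h1
          omega
        have hp2 : 2 ≤ p := by
          rcases heven with ⟨r, hr⟩
          omega
        refine ⟨p - 2, p - 1, by omega, by omega,
          hdpos _ (by omega), hdpos _ (by omega), ?_, ?_⟩
        · intro a b hab hbn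
          by_cases hbS : b = p - 2 ∨ b = p - 1
          · rw [if_pos hbS]
            have h1 := hmono a b hab hbn
            by_cases haS : a = p - 2 ∨ a = p - 1
            · rw [if_pos haS]; omega
            · rw [if_neg haS]; omega
          · rw [if_neg hbS]
            by_cases haS : a = p - 2 ∨ a = p - 1
            · rw [if_pos haS]
              push_neg at hbS
              have hbp : p ≤ b := by omega
              have := hdzero b hbp hbn
              omega
            · rw [if_neg haS]
              exact hmono a b hab hbn
        · by_cases h0 : (0:ℕ) = p - 2 ∨ (0:ℕ) = p - 1
          · rw [if_pos h0]
            have : d 0 = 1 := hD2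
            rw [this]
            simp
          · rw [if_neg h0]
            have hd0 : d 0 = 1 := hD2
            have hmem : (0:ℕ) ∈ (Finset.range n).filter
                (fun k => 0 < (if k = p - 2 ∨ k = p - 1 then d k - 1 else d k)) := by
              refine Finset.mem_filter.2 ⟨Finset.mem_range.2 hn, ?_⟩
              rw [if_neg h0]
              omega
            have := Finset.card_pos.2 ⟨0, hmem⟩
            rw [hd0]
            simpa using this
      · have hD2' : 2 ≤ D := by omega
        by_cases hM2 : 2 ≤ M
        · -- Case B : at least two maximal entries; cut the last two of them.
          have hiM : M - 2 < M := by omega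
          have hjM : M - 1 < M := by omega
          have hdi : d (M - 2) = D := (hMchar _ (by omega)).2 hiM
          have hdj : d (M - 1) = D := (hMchar _ (by omega)).2 hjM
          refine ⟨M - 2, M - 1, by omega, by omega, by omega, by omega, ?_, ?_⟩
          · intro a b hab hbn
            by_cases hbS : b = M - 2 ∨ b = M - 1
            · rw [if_pos hbS]
              have h1 := hmono a b hab hbn
              by_cases haS : a = M - 2 ∨ a = M - 1
              · rw [if_pos haS]; omega
              · rw [if_neg haS]; omega
            · rw [if_neg hbS]
              by_cases haS : a = M - 2 ∨ a = M - 1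
              · rw [if_pos haS]
                push_neg at hbS
                have hbM : M ≤ b := by omega
                have hda : d a = D := by rcases haS with rfl | rfl <;> assumption
                have hbne : ¬(d b = D) := fun h => by
                  have := (hMchar b hbn).1 h; omega
                have hble := hdleD b hbn
                omega
              · rw [if_neg haS]
                exact hmono a b hab hbn
          · have hsub : Finset.range p ⊆ (Finset.range n).filter
                (fun k => 0 < (if k = M - 2 ∨ k = M - 1 then d k - 1 else d k)) := by
              intro k hk
              rw [Finset.mem_range] at hk
              refine Finset.mem_filter.2 ⟨Finset.mem_range.2 (by omega), ?_⟩
              by_cases hkS : k = M - 2 ∨ k = M - 1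
              · rw [if_pos hkS]
                have : d k = D := by rcases hkS with rfl | rfl <;> assumption
                omega
              · rw [if_neg hkS]
                exact hdpos k hk
            have hcard := Finset.card_le_card hsub
            rw [Finset.card_range] at hcard
            have hle : (if (0:ℕ) = M - 2 ∨ (0:ℕ) = M - 1 then d 0 - 1 else d 0) ≤ D := by
              split <;> omega
            calc (if (0:ℕ) = M - 2 ∨ (0:ℕ) = M - 1 then d 0 - 1 else d 0) ^ 2
                ≤ D ^ 2 := Nat.pow_le_pow_left hle 2
              _ ≤ p := hinv
              _ ≤ _ := hcard
        · -- Case C : unique maximal entry; cut it together with the last positive entry.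
          have hMeq : M = 1 := by omega
          have hp4 : 4 ≤ p := by
            have h4 : 2 ^ 2 ≤ D ^ 2 := Nat.pow_le_pow_left hD2' 2
            calc 4 = 2 ^ 2 := by norm_num
              _ ≤ D ^ 2 := h4
              _ ≤ p := hinv
          refine ⟨0, p - 1, by omega, by omega, by omega, hdpos _ (by omega), ?_, ?_⟩
          · intro a b hab hbn
            by_cases hbS : b = 0 ∨ b = p - 1
            · rw [if_pos hbS]
              have h1 := hmono a b hab hbn
              by_cases haS : a = 0 ∨ a = p - 1
              · rw [if_pos haS]; omega
              · rw [if_neg haS]; omega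
            · rw [if_neg hbS]
              by_cases haS : a = 0 ∨ a = p - 1
              · rw [if_pos haS]
                push_neg at hbS
                rcases haS with rfl | rfl
                · -- a = 0 : b ≥ 1 = M so d b < D
                  have hb1 : 1 ≤ b := by omega
                  have hbne : ¬(d b = D) := fun h => by
                    have := (hMchar b hbn).1 h; omega
                  have hble := hdleD b hbn
                  omega
                · -- a = p - 1 : b ≥ p so d b = 0
                  have := hdzero b (by omega) hbn
                  omega
              · rw [if_neg haS]
                exact hmono a b hab hbn
          · have h0S : (0:ℕ) = 0 ∨ (0:ℕ) = p - 1 := Or.inl rfl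
            rw [if_pos h0S]
            have hsub : Finset.range (p - 1) ⊆ (Finset.range n).filter
                (fun k => 0 < (if k = 0 ∨ k = p - 1 then d k - 1 else d k)) := by
              intro k hk
              rw [Finset.mem_range] at hk
              refine Finset.mem_filter.2 ⟨Finset.mem_range.2 (by omega), ?_⟩
              by_cases hkS : k = 0 ∨ k = p - 1
              · have hk0 : k = 0 := by omega
                subst hk0
                rw [if_pos hkS]
                omega
              · rw [if_neg hkS]
                exact hdpos k (by omega)
            have hcard := Finset.card_le_card hsub
            rw [Finset.card_range] at hcard
            have harith : (d 0 - 1) ^ 2 + 1 ≤ D ^ 2 := by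
              obtain ⟨m, hm⟩ : ∃ m, D = m + 2 := ⟨D - 2, by omega⟩
              rw [← hD, hm]
              have h1 : m + 2 - 1 = m + 1 := by omega
              rw [h1]
              nlinarith
            omega
    -- apply the inductive hypothesis to the reduced sequence
    have hin : i < n := lt_trans hij hjn
    have hs := sum_two_split n i j (Nat.ne_of_lt hij) hin hjn d
    have hs' := sum_two_split n i j (Nat.ne_of_lt hij) hin hjn
      (fun k => if k = i ∨ k = j then d k - 1 else d k)
    have hcong : ∑ k ∈ ((Finset.range n).erase i).erase j,
        (if k = i ∨ k = j then d k - 1 else d k)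
        = ∑ k ∈ ((Finset.range n).erase i).erase j, d k := by
      refine Finset.sum_congr rfl (fun k hk => ?_)
      rw [Finset.mem_erase, Finset.mem_erase] at hk
      rw [if_neg (by tauto)]
    have hii : (if i = i ∨ i = j then d i - 1 else d i) = d i - 1 := if_pos (Or.inl rfl)
    have hjj : (if j = i ∨ j = j then d j - 1 else d j) = d j - 1 := if_pos (Or.inr rfl)
    rw [hii, hjj, hcong] at hs'
    have hN2 : 2 ≤ N := by omega
    have hsum' : ∑ k ∈ Finset.range n, (if k = i ∨ k = j then d k - 1 else d k)
        = N - 2 := by omega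
    have heven' : Even (N - 2) := by
      rcases heven with ⟨r, hr⟩
      exact ⟨r - 1, by omega⟩
    obtain ⟨G', hG'⟩ := IH (N - 2) (by omega) _ hsum' hmono' heven' hinv'
    have hG'' : ∀ w : Fin n, (G'.neighborSet w).ncard
        = if w.val = i ∨ w.val = j then d w.val - 1 else d w.val := hG'
    set u : Fin n := ⟨i, hin⟩ with hu
    set v : Fin n := ⟨j, hjn⟩ with hv
    have huv : u ≠ v := by
      intro h
      have : i = j := congrArg Fin.val h
      omega
    have hvalu : u.val = i := rfl
    have hvalv : v.val = j := rfl
    classical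
    by_cases hAdj : G'.Adj u v
    · -- u and v adjacent in G' : perform a 2-switch, then the edge count works out
      letI : DecidableRel G'.Adj := Classical.decRel _
      have hdegeq : ∀ w : Fin n, G'.degree w
          = if w.val = i ∨ w.val = j then d w.val - 1 else d w.val := by
        intro w
        rw [← ncard_neighborSet_eq_degree]
        exact hG'' w
      have hdiu : G'.degree u = d i - 1 := by
        rw [hdegeq u, hvalu, if_pos (Or.inl rfl)]
      have hdjv : G'.degree v = d j - 1 := by
        rw [hdegeq v, hvalv, if_pos (Or.inr rfl)]
      have hdi2 : 2 ≤ d i := by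
        have h1 : 0 < G'.degree u := by
          rw [← SimpleGraph.card_neighborFinset_eq_degree]
          exact Finset.card_pos.2 ⟨v, (SimpleGraph.mem_neighborFinset G' u v).2 hAdj⟩
        omega
      have hdj2 : 2 ≤ d j := by
        have h1 : 0 < G'.degree v := by
          rw [← SimpleGraph.card_neighborFinset_eq_degree]
          exact Finset.card_pos.2 ⟨u, (SimpleGraph.mem_neighborFinset G' v u).2 hAdj.symm⟩
        omega
      have hDD : 2 ≤ D := le_trans hdi2 (hdleD i hin)
      have hcount : D ^ 2 ≤ (Finset.univ.filter (fun w : Fin n => 0 < G'.degree w)).card := by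
        have h1 : (Finset.univ.filter (fun w : Fin n => 0 < G'.degree w))
            = Finset.univ.filter (fun w : Fin n =>
              0 < (if w.val = i ∨ w.val = j then d w.val - 1 else d w.val)) := by
          refine Finset.filter_congr (fun w _ => ?_)
          rw [hdegeq w]
        rw [h1, card_filter_val n (fun k => 0 < (if k = i ∨ k = j then d k - 1 else d k))]
        have h2 : (Finset.range n).filter
              (fun k => 0 < (if k = i ∨ k = j then d k - 1 else d k))
            = (Finset.range n).filter (fun k => 0 < d k) := by
          refine Finset.filter_congr (fun k hk => ?_)
          by_cases hkS : k = i ∨ k = j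
          · rw [if_pos hkS]
            rcases hkS with rfl | rfl
            · omega
            · omega
          · rw [if_neg hkS]
        rw [h2]
        exact hinv
      have hmaxdeg : ∀ w : Fin n, G'.degree w ≤ D := by
        intro w
        rw [hdegeq w]
        have := hdleD w.val w.isLt
        split <;> omega
      have hu_lt : G'.degree u < D := by
        rw [hdiu]
        have := hdleD i hin
        omega
      have hv_lt : G'.degree v < D := by
        rw [hdjv]
        have := hdleD j hjn
        omega
      obtain ⟨x, y, hxy, hux, hvy, hxu, hxv, hyu, hyv⟩ :=
        swap_exists G' D u v hAdj hu_lt hv_lt hmaxdeg hcount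
      have hxyne : x ≠ y := hxy.ne
      have hvyne : v ≠ y := fun h => hyv h.symm
      have huxne : u ≠ x := fun h => hxu h.symm
      have hG1 : ¬(delE G' x y).Adj v y := by
        rw [delE_adj]
        tauto
      have hG2 : ¬(addE (delE G' x y) v y).Adj u x := by
        rw [addE_adj]
        rintro (h | ⟨_, ⟨h1, h2⟩ | ⟨h1, h2⟩⟩)
        · rw [delE_adj] at h
          exact hux h.1
        · exact huv h1
        · exact hyu h1.symm
      refine ⟨addE (addE (delE G' x y) v y) u x, fun w => ?_⟩
      have e1 := delE_deg G' x y hxy w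
      have e2 := addE_deg (delE G' x y) v y hvyne hG1 w
      have e3 := addE_deg (addE (delE G' x y) v y) u x huxne hG2 w
      rw [e2] at e3
      rw [hG'' w] at e1
      rw [e3]
      by_cases hwu : w = u
      · subst hwu
        rw [hvalu] at e1 ⊢
        rw [if_neg (by rintro (h | h); exacts [huv h, hyu h.symm]),
          if_pos (Or.inl rfl : u = u ∨ u = x)]
        rw [if_neg (by rintro (h | h); exacts [hxu h.symm, hyu h.symm]),
          if_pos (Or.inl rfl : i = i ∨ i = j)] at e1
        omega
      · by_cases hwv : w = v
        · subst hwv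
          rw [hvalv] at e1 ⊢
          rw [if_pos (Or.inl rfl : v = v ∨ v = y),
            if_neg (by rintro (h | h); exacts [huv h.symm, hxv h.symm])]
          rw [if_neg (by rintro (h | h); exacts [hxv h.symm, hyv h.symm]),
            if_pos (Or.inr rfl : j = i ∨ j = j)] at e1
          omega
        · have hwi : w.val ≠ i := fun h => hwu (Fin.ext h)
          have hwj : w.val ≠ j := fun h => hwv (Fin.ext h)
          have hij' : ¬(w.val = i ∨ w.val = j) := by
            rintro (h | h)
            exacts [hwi h, hwj h]
          by_cases hwx : w = x
          · rw [if_pos (show w = x ∨ w = y from Or.inl hwx), if_neg hij'] at e1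
            rw [if_neg (show ¬(w = v ∨ w = y) by
                rintro (h | h)
                exacts [hwv h, hxyne (hwx.symm.trans h)]),
              if_pos (show w = u ∨ w = x from Or.inr hwx)]
            omega
          · by_cases hwy : w = y
            · rw [if_pos (show w = x ∨ w = y from Or.inr hwy), if_neg hij'] at e1
              rw [if_pos (show w = v ∨ w = y from Or.inr hwy),
                if_neg (show ¬(w = u ∨ w = x) by
                  rintro (h | h)
                  exacts [hwu h, hwx h])]
              omega
            · rw [if_neg (show ¬(w = x ∨ w = y) by
                  rintro (h | h)
                  exacts [hwx h, hwy h]), if_neg hij'] at e1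
              rw [if_neg (show ¬(w = v ∨ w = y) by
                  rintro (h | h)
                  exacts [hwv h, hwy h]),
                if_neg (show ¬(w = u ∨ w = x) by
                  rintro (h | h)
                  exacts [hwu h, hwx h])]
              omega
    · -- u and v not adjacent : simply add the edge uv
      refine ⟨addE G' u v, fun w => ?_⟩
      rw [addE_deg G' u v huv hAdj w, hG'' w]
      have hiff : (w = u ∨ w = v) ↔ (w.val = i ∨ w.val = j) := by
        constructor
        · rintro (rfl | rfl)
          exacts [Or.inl rfl, Or.inr rfl]
        · rintro (h | h)
          exacts [Or.inl (Fin.ext h), Or.inr (Fin.ext h)]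
      rw [if_congr hiff rfl rfl]
      by_cases hC : w.val = i ∨ w.val = j
      · rw [if_pos hC, if_pos hC]
        rcases hC with h | h <;> rw [h] <;> omega
      · rw [if_neg hC, if_neg hC]
        omega

end Main

/-- If `d 0 ≥ d 1 ≥ ⋯ ≥ d (n-1) ≥ 1`, the sum of the `d i` is even, and
`n ≥ (d 0)²`, then the sequence is graphic. -/
theorem stmt0 (n : ℕ) (hn : 0 < n) (d : ℕ → ℕ)
    (hmono : ∀ i j, i ≤ j → j < n → d j ≤ d i)
    (hpos : ∀ i, i < n → 1 ≤ d i)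
    (heven : Even (∑ i ∈ Finset.range n, d i))
    (hlen : (d 0) ^ 2 ≤ n) :
    ∃ G : SimpleGraph (Fin n), degreeMultiset G = (Finset.range n).val.map d := by
  have hfilter : (Finset.range n).filter (fun k => 0 < d k) = Finset.range n :=
    Finset.filter_true_of_mem (fun k hk => hpos k (Finset.mem_range.1 hk))
  obtain ⟨G, hG⟩ := aux_graphic n (∑ i ∈ Finset.range n, d i) d rfl hmono heven
    (by rw [hfilter, Finset.card_range]; exact hlen)
  refine ⟨G, ?_⟩
  unfold degreeMultiset
  have h1 : (fun v : Fin n => (G.neighborSet v).ncard) = fun v : Fin n => d v.val :=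
    funext hG
  rw [h1]
  have h2 : Multiset.map (fun v : Fin n => d v.val) Finset.univ.val
      = Multiset.map d (Multiset.map Fin.val (Finset.univ.val : Multiset (Fin n))) := by
    rw [Multiset.map_map]
    rfl
  rw [h2]
  congr 1
  have h3 := Fin.map_valEmbedding_univ (n := n)
  have h4 : ((Finset.univ : Finset (Fin n)).map Fin.valEmbedding).val
      = Multiset.map Fin.val (Finset.univ.val : Multiset (Fin n)) := by
    rw [Finset.map_val]
    rfl
  rw [← h4, h3, ← Nat.Iio_eq_range]
end

section
/- Let D = (d_1, ..., d_n) with d_1 ≥ ... ≥ d_n ≥ 1 and n ≥ d_1². If k is an integer with 1 < k ≤ d_1, then d_1 + ... + d_k ≤ k(k−1) + Σ_{i=k+1}^{n} min(d_i, k). -/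
/-- Erdős–Gallai case `1 < k ≤ d 0`, assuming `n ≥ (d 0)²`. -/
theorem stmt2 (n : ℕ) (hn : 0 < n) (d : ℕ → ℕ)
    (hmono : ∀ i j, i ≤ j → j < n → d j ≤ d i)
    (hpos : ∀ i, i < n → 1 ≤ d i)
    (hlen : (d 0) ^ 2 ≤ n)
    (k : ℕ) (hk1 : 1 < k) (hk2 : k ≤ d 0) :
    ∑ i ∈ Finset.range k, d i ≤ k * (k - 1) + ∑ i ∈ Finset.Ico k n, min (d i) k := by
  have hkn : k ≤ n := le_trans (le_trans hk2 (by nlinarith : d 0 ≤ n)) le_rfl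
  -- upper bound LHS
  have h1 : ∑ i ∈ Finset.range k, d i ≤ k * d 0 := by
    calc ∑ i ∈ Finset.range k, d i ≤ ∑ _i ∈ Finset.range k, d 0 := by
          apply Finset.sum_le_sum
          intro i hi
          exact hmono 0 i (Nat.zero_le _) (lt_of_lt_of_le (Finset.mem_range.mp hi) hkn)
      _ = k * d 0 := by rw [Finset.sum_const, Finset.card_range, smul_eq_mul]
  have h2 : n - k ≤ ∑ i ∈ Finset.Ico k n, min (d i) k := by
    calc n - k = ∑ _i ∈ Finset.Ico k n, 1 := by
          rw [Finset.sum_const, Nat.card_Ico, smul_eq_mul, mul_one]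
      _ ≤ ∑ i ∈ Finset.Ico k n, min (d i) k := by
          apply Finset.sum_le_sum
          intro i hi
          exact le_min (hpos i (Finset.mem_Ico.mp hi).2) (by omega)
  have h3 : k * d 0 ≤ k * (k - 1) + (n - k) := by
    have ha : k * d 0 ≤ d 0 * d 0 := Nat.mul_le_mul_right _ hk2
    have hb : d 0 * d 0 ≤ n := by nlinarith
    have hc : k * (k - 1) + k = k * k := by
      cases k with
      | zero => omega
      | succ m => simp [Nat.succ_sub_one]; ring
    have hd : 2 * k ≤ k * k := Nat.mul_le_mul_right k (by omega)
    omega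
  omega
end

section
/- If D = (d_1, ..., d_n) is a graphic sequence with maximum entry d_1, then there exists a simple graph G with degree sequence D such that every connected component of G has at most 3·d_1² vertices. -/
set_option linter.unusedSectionVars false
set_option linter.unusedVariables false


namespace Scratch


variable {V : Type} [Fintype V]

/-- ncard degree -/
noncomputable def ndeg (G : SimpleGraph V) (v : V) : ℕ := (G.neighborSet v).ncard

lemma degreeMultiset_def (G : SimpleGraph V) :
    degreeMultiset G = Finset.univ.val.map (ndeg G) := rfl

lemma ndeg_eq_degree (G : SimpleGraph V) [DecidableRel G.Adj] (v : V) :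
    ndeg G v = G.degree v := by
  rw [ndeg, ← SimpleGraph.card_neighborSet_eq_degree, ← Nat.card_eq_fintype_card]
  exact (Nat.card_coe_set_eq _).symm

lemma card_degreeMultiset (G : SimpleGraph V) :
    Multiset.card (degreeMultiset G) = Fintype.card V := by
  rw [degreeMultiset_def, Multiset.card_map]; rfl

lemma sum_degreeMultiset_even (G : SimpleGraph V) : Even (degreeMultiset G).sum := by
  classical
  have h : (degreeMultiset G).sum = ∑ v, G.degree v := by
    rw [degreeMultiset_def, Finset.sum]
    congr 1
    exact Multiset.map_congr rfl fun v _ => ndeg_eq_degree G v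
  rw [h, SimpleGraph.sum_degrees_eq_twice_card_edges]
  exact ⟨_, (two_mul _)⟩

/-- transfer a graph along an equivalence, preserving degree multiset and
    component ncards -/
lemma transfer {W : Type} [Fintype W] (e : V ≃ W) (G : SimpleGraph V) :
    ∃ H : SimpleGraph W, degreeMultiset H = degreeMultiset G ∧
      ∀ x : W, {y : W | H.Reachable x y}.ncard
        = {y : V | G.Reachable (e.symm x) y}.ncard := by
  refine ⟨G.comap e.symm, ?_, ?_⟩
  · have hdeg : ∀ x : W, ndeg (G.comap e.symm) x = ndeg G (e.symm x) := by
      intro x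
      have hset : (G.comap e.symm).neighborSet x = e.symm ⁻¹' (G.neighborSet (e.symm x)) := rfl
    -- preimage under equiv has same ncard
      rw [ndeg, hset, ndeg]
      rw [← Equiv.image_symm_eq_preimage]
      exact Set.ncard_image_of_injective _ (e.symm.symm.injective)
    rw [degreeMultiset_def, degreeMultiset_def]
    have : Finset.univ.val.map (ndeg (G.comap ⇑e.symm))
        = Finset.univ.val.map (fun x => ndeg G (e.symm x)) :=
      Multiset.map_congr rfl fun x _ => hdeg x
    rw [this]
    have huniv : (Finset.univ : Finset V) = Finset.univ.map e.symm.toEmbedding := by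
      simp
    rw [huniv, Finset.map_val, Multiset.map_map]
    rfl
  · intro x
    let hom1 : (G.comap ⇑e.symm) →g G := ⟨e.symm, fun h => h⟩
    let hom2 : G →g (G.comap ⇑e.symm) := ⟨⇑e, fun {a b} h => by
      show G.Adj (e.symm (e a)) (e.symm (e b)); simpa using h⟩
    have hre : ∀ y : W, (G.comap ⇑e.symm).Reachable x y ↔ G.Reachable (e.symm x) (e.symm y) := by
      intro y
      constructor
      · intro h
        exact SimpleGraph.Reachable.map hom1 h
      · intro h
        have := SimpleGraph.Reachable.map hom2 h
        have h2 : ∀ z : W, hom2 (e.symm z) = z := fun z => by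
          show e (e.symm z) = z; simp
        rwa [h2 x, h2 y] at this
    have hset : {y : W | (G.comap ⇑e.symm).Reachable x y}
        = ⇑e.symm ⁻¹' {z : V | G.Reachable (e.symm x) z} := by
      ext y; exact hre y
    rw [hset, ← Equiv.image_symm_eq_preimage]
    exact Set.ncard_image_of_injective _ (e.symm.symm.injective)



/-- trivial bound on component size -/
lemma reachSet_ncard_le (G : SimpleGraph V) (v : V) :
    {w : V | G.Reachable v w}.ncard ≤ Fintype.card V := by
  have h := Set.ncard_le_ncard (Set.subset_univ {w : V | G.Reachable v w}) (Set.finite_univ)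
  rwa [Set.ncard_univ, Nat.card_eq_fintype_card] at h

/-- a realization of `D` all of whose components have at most `c` vertices -/
def SmallReal (D : Multiset ℕ) (c : ℕ) : Prop :=
  ∃ (V : Type) (_ : Fintype V) (G : SimpleGraph V), degreeMultiset G = D ∧
    ∀ v : V, {w : V | G.Reachable v w}.ncard ≤ c

lemma smallReal_of_card_le {W : Type} [Fintype W] (G : SimpleGraph W) {c : ℕ}
    (hc : Fintype.card W ≤ c) : SmallReal (degreeMultiset G) c :=
  ⟨W, inferInstance, G, rfl, fun v => (reachSet_ncard_le G v).trans hc⟩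

section Sum

variable {α β : Type} [Fintype α] [Fintype β] (G : SimpleGraph α) (H : SimpleGraph β)

lemma ndeg_sum_inl (a : α) : ndeg (G ⊕g H) (Sum.inl a) = ndeg G a := by
  have hset : (G ⊕g H).neighborSet (Sum.inl a) = Sum.inl '' (G.neighborSet a) := by
    ext x
    cases x with
    | inl b => simp [SimpleGraph.neighborSet]
    | inr b => simp [SimpleGraph.neighborSet]
  rw [ndeg, hset, Set.ncard_image_of_injective _ Sum.inl_injective]; rfl

lemma ndeg_sum_inr (b : β) : ndeg (G ⊕g H) (Sum.inr b) = ndeg H b := by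
  have hset : (G ⊕g H).neighborSet (Sum.inr b) = Sum.inr '' (H.neighborSet b) := by
    ext x
    cases x with
    | inl c => simp [SimpleGraph.neighborSet]
    | inr c => simp [SimpleGraph.neighborSet]
  rw [ndeg, hset, Set.ncard_image_of_injective _ Sum.inr_injective]; rfl

lemma degreeMultiset_sum :
    degreeMultiset (G ⊕g H) = degreeMultiset G + degreeMultiset H := by
  rw [degreeMultiset_def, degreeMultiset_def, degreeMultiset_def]
  have huniv : (Finset.univ : Finset (α ⊕ β)).val
      = (Finset.univ.val.map Sum.inl) + (Finset.univ.val.map Sum.inr) := by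
    rw [← Finset.univ_disjSum_univ, Finset.val_disjSum]
    rfl
  rw [huniv, Multiset.map_add, Multiset.map_map, Multiset.map_map]
  congr 1
  · exact Multiset.map_congr rfl fun a _ => ndeg_sum_inl G H a
  · exact Multiset.map_congr rfl fun b _ => ndeg_sum_inr G H b

lemma walk_sum_inl {x y : α ⊕ β} (w : (G ⊕g H).Walk x y) :
    ∀ a : α, x = Sum.inl a → ∃ b : α, y = Sum.inl b ∧ G.Reachable a b := by
  induction w with
  | nil => exact fun a ha => ⟨a, ha, SimpleGraph.Reachable.refl a⟩
  | @cons u v z hadj w ih =>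
    intro a ha
    subst ha
    cases v with
    | inl a' =>
      have hadj' : G.Adj a a' := by simpa using hadj
      obtain ⟨b, hb, hr⟩ := ih a' rfl
      exact ⟨b, hb, hadj'.reachable.trans hr⟩
    | inr b' => simp [SimpleGraph.sum_adj] at hadj

lemma reachable_sum_inl {a : α} {x : α ⊕ β} (h : (G ⊕g H).Reachable (Sum.inl a) x) :
    ∃ b : α, x = Sum.inl b ∧ G.Reachable a b := by
  obtain ⟨w⟩ := h
  exact walk_sum_inl G H w a rfl

lemma walk_sum_inr {x y : α ⊕ β} (w : (G ⊕g H).Walk x y) :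
    ∀ a : β, x = Sum.inr a → ∃ b : β, y = Sum.inr b ∧ H.Reachable a b := by
  induction w with
  | nil => exact fun a ha => ⟨a, ha, SimpleGraph.Reachable.refl a⟩
  | @cons u v z hadj w ih =>
    intro a ha
    subst ha
    cases v with
    | inr a' =>
      have hadj' : H.Adj a a' := by simpa using hadj
      obtain ⟨b, hb, hr⟩ := ih a' rfl
      exact ⟨b, hb, hadj'.reachable.trans hr⟩
    | inl b' => simp [SimpleGraph.sum_adj] at hadj

lemma reachable_sum_inr {a : β} {x : α ⊕ β} (h : (G ⊕g H).Reachable (Sum.inr a) x) :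
    ∃ b : β, x = Sum.inr b ∧ H.Reachable a b := by
  obtain ⟨w⟩ := h
  exact walk_sum_inr G H w a rfl

/-- reachability set in a disjoint sum, left side -/
lemma reachSet_sum_inl (a : α) :
    {x : α ⊕ β | (G ⊕g H).Reachable (Sum.inl a) x}
      = Sum.inl '' {b : α | G.Reachable a b} := by
  ext x
  constructor
  · intro hx
    obtain ⟨b, rfl, hr⟩ := reachable_sum_inl G H hx
    exact ⟨b, hr, rfl⟩
  · rintro ⟨b, hb, rfl⟩
    exact SimpleGraph.Reachable.map (SimpleGraph.Embedding.sumInl (H := H)).toHom hb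

lemma reachSet_sum_inr (a : β) :
    {x : α ⊕ β | (G ⊕g H).Reachable (Sum.inr a) x}
      = Sum.inr '' {b : β | H.Reachable a b} := by
  ext x
  constructor
  · intro hx
    obtain ⟨b, rfl, hr⟩ := reachable_sum_inr G H hx
    exact ⟨b, hr, rfl⟩
  · rintro ⟨b, hb, rfl⟩
    exact SimpleGraph.Reachable.map (SimpleGraph.Embedding.sumInr (G := G)).toHom hb

/-- disjoint sum of small realizations -/
lemma SmallReal.add {D₁ D₂ : Multiset ℕ} {c : ℕ}
    (h₁ : SmallReal D₁ c) (h₂ : SmallReal D₂ c) : SmallReal (D₁ + D₂) c := by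
  obtain ⟨α, hα, G, hG, hGc⟩ := h₁
  obtain ⟨β, hβ, H, hH, hHc⟩ := h₂
  refine ⟨α ⊕ β, inferInstance, G ⊕g H, by rw [degreeMultiset_sum, hG, hH], ?_⟩
  intro v
  cases v with
  | inl a =>
    rw [reachSet_sum_inl, Set.ncard_image_of_injective _ Sum.inl_injective]
    exact hGc a
  | inr b =>
    rw [reachSet_sum_inr, Set.ncard_image_of_injective _ Sum.inr_injective]
    exact hHc b

end Sum



/-- degree multiset of the complete graph -/
lemma degreeMultiset_top (m : ℕ) :
    degreeMultiset (⊤ : SimpleGraph (Fin m)) = Multiset.replicate m (m - 1) := by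
  rw [degreeMultiset_def]
  have h : ∀ v : Fin m, ndeg (⊤ : SimpleGraph (Fin m)) v = m - 1 := by
    intro v
    rw [ndeg]
    have hset : (⊤ : SimpleGraph (Fin m)).neighborSet v = Set.univ \ {v} := by
      ext w; simp [SimpleGraph.neighborSet, eq_comm, ne_comm]
    rw [hset]
    have := Set.ncard_diff_singleton_add_one (Set.mem_univ v) (Set.finite_univ)
    have h2 : (Set.univ : Set (Fin m)).ncard = m := by
      rw [Set.ncard_univ, Nat.card_eq_fintype_card, Fintype.card_fin]
    omega
  rw [Multiset.map_congr rfl fun v _ => h v, Multiset.map_const']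
  congr 1
  exact Finset.card_fin m

/-- star graph: center `inl ()` joined to all `x` leaves -/
def starG (x : ℕ) : SimpleGraph (Unit ⊕ Fin x) where
  Adj u v := (u.isLeft ∧ v.isRight) ∨ (u.isRight ∧ v.isLeft)
  symm := by constructor; intro u v h; tauto
  loopless := by constructor; intro u; cases u <;> simp

lemma degreeMultiset_starG (x : ℕ) :
    degreeMultiset (starG x) = x ::ₘ Multiset.replicate x 1 := by
  rw [degreeMultiset_def]
  have huniv : (Finset.univ : Finset (Unit ⊕ Fin x)).val
      = (Finset.univ.val.map Sum.inl) + (Finset.univ.val.map Sum.inr) := by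
    rw [← Finset.univ_disjSum_univ, Finset.val_disjSum]; rfl
  rw [huniv, Multiset.map_add, Multiset.map_map, Multiset.map_map]
  have h1 : ∀ u : Unit, ndeg (starG x) (Sum.inl u) = x := by
    intro u
    rw [ndeg]
    have hset : (starG x).neighborSet (Sum.inl u) = Sum.inr '' Set.univ := by
      ext w; cases w <;> simp [SimpleGraph.neighborSet, starG]
    rw [hset, Set.ncard_image_of_injective _ Sum.inr_injective, Set.ncard_univ,
      Nat.card_eq_fintype_card, Fintype.card_fin]
  have h2 : ∀ i : Fin x, ndeg (starG x) (Sum.inr i) = 1 := by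
    intro i
    rw [ndeg]
    have hset : (starG x).neighborSet (Sum.inr i) = {Sum.inl ()} := by
      ext w; cases w <;> simp [SimpleGraph.neighborSet, starG]
    rw [hset, Set.ncard_singleton]
  rw [Multiset.map_congr (f := ndeg (starG x) ∘ Sum.inl) rfl fun u _ => h1 u,
    Multiset.map_congr (f := ndeg (starG x) ∘ Sum.inr) rfl fun i _ => h2 i,
    Multiset.map_const', Multiset.map_const']
  have c1 : Multiset.card (Finset.univ : Finset Unit).val = 1 := rfl
  have c2 : Multiset.card (Finset.univ : Finset (Fin x)).val = x := Finset.card_fin x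
  rw [c1, c2]
  simp [Multiset.singleton_add]

/-- perfect matching on `Fin m × Fin 2` -/
def matchG (m : ℕ) : SimpleGraph (Fin m × Fin 2) where
  Adj p q := p.1 = q.1 ∧ p.2 ≠ q.2
  symm := by constructor; intro p q h; exact ⟨h.1.symm, h.2.symm⟩
  loopless := by constructor; intro p h; exact h.2 rfl

lemma degreeMultiset_matchG (m : ℕ) :
    degreeMultiset (matchG m) = Multiset.replicate (2 * m) 1 := by
  rw [degreeMultiset_def]
  have h : ∀ p : Fin m × Fin 2, ndeg (matchG m) p = 1 := by
    intro p
    rw [ndeg]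
    have hval : ∀ a : Fin 2, ∀ b : Fin 2, b ≠ a ↔ b = 1 - a := by decide
    have hset : (matchG m).neighborSet p = {(p.1, 1 - p.2)} := by
      ext q
      simp only [SimpleGraph.neighborSet, matchG, Set.mem_setOf_eq, Set.mem_singleton_iff]
      constructor
      · rintro ⟨h1, h2⟩
        have h3 := (hval p.2 q.2).mp (Ne.symm h2)
        cases q; cases p; simp_all [Prod.ext_iff]
      · rintro rfl
        exact ⟨rfl, Ne.symm ((hval p.2 (1 - p.2)).mpr rfl)⟩
    rw [hset, Set.ncard_singleton]
  rw [Multiset.map_congr rfl fun p _ => h p, Multiset.map_const']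
  congr 1
  have : Multiset.card (Finset.univ : Finset (Fin m × Fin 2)).val
      = Fintype.card (Fin m × Fin 2) := rfl
  rw [this]
  simp [Fintype.card_prod, mul_comm]



omit [Fintype V] in
lemma ndeg_congr (G₂ G : SimpleGraph V) (x : V)
    (h : G₂.neighborSet x = G.neighborSet x) : ndeg G₂ x = ndeg G x := by
  rw [ndeg, ndeg, h]

lemma ndeg_insert (G₂ G : SimpleGraph V) (x y : V) (hy : y ∉ G.neighborSet x)
    (h : G₂.neighborSet x = insert y (G.neighborSet x)) :
    ndeg G₂ x = ndeg G x + 1 := by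
  rw [ndeg, ndeg, h, Set.ncard_insert_of_notMem hy (Set.toFinite _)]

lemma ndeg_exchange (G₂ G : SimpleGraph V) (x y z : V) (hy : y ∉ G.neighborSet x)
    (hz : z ∈ G.neighborSet x)
    (h : G₂.neighborSet x = insert y (G.neighborSet x \ {z})) :
    ndeg G₂ x = ndeg G x := by
  rw [ndeg, ndeg, h]
  have h1 : y ∉ G.neighborSet x \ {z} := fun hc => hy hc.1
  rw [Set.ncard_insert_of_notMem h1 (Set.toFinite _)]
  exact Set.ncard_diff_singleton_add_one hz (Set.toFinite _)

set_option maxHeartbeats 2000000 in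
theorem swap_lemma (G : SimpleGraph V) (u v : V) (huv : u ≠ v) (d2 : ℕ)
    (hother : ∀ w, w ≠ u → w ≠ v → ndeg G w ≤ d2)
    (hpos : ∀ w, 1 ≤ ndeg G w)
    (hcard : ndeg G u + ndeg G v + (ndeg G u + ndeg G v - 2) * (d2 - 1) + 1 ≤ Fintype.card V) :
    ∃ G₂ : SimpleGraph V,
      ndeg G₂ u = ndeg G u + 1 ∧ ndeg G₂ v = ndeg G v + 1 ∧
      ∀ w, w ≠ u → w ≠ v → ndeg G₂ w = ndeg G w := by
  classical
  by_cases hadj : G.Adj u v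
  swap
  · -- just add the edge u-v
    have huv' : v ≠ u := huv.symm
    refine ⟨⟨fun a b => G.Adj a b ∨ (a = u ∧ b = v) ∨ (a = v ∧ b = u), ?_, ?_⟩, ?_, ?_, ?_⟩
    · constructor; intro a b h
      rcases h with h | h | h
      · exact Or.inl h.symm
      · exact Or.inr (Or.inr ⟨h.2, h.1⟩)
      · exact Or.inr (Or.inl ⟨h.2, h.1⟩)
    · constructor; intro a h
      rcases h with h | ⟨rfl, h⟩ | ⟨rfl, h⟩
      · exact G.loopless.irrefl a h
      · exact huv h
      · exact huv' h
    · refine ndeg_insert _ G u v hadj ?_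
      ext b
      show _ ∨ _ ↔ _
      simp only [Set.mem_insert_iff, SimpleGraph.mem_neighborSet]
      constructor
      · intro h; tauto
      · intro h; tauto
    · have hadj' : ¬ G.Adj v u := fun h => hadj h.symm
      refine ndeg_insert _ G v u hadj' ?_
      ext b
      show _ ∨ _ ↔ _
      simp only [Set.mem_insert_iff, SimpleGraph.mem_neighborSet]
      constructor
      · intro h; tauto
      · intro h; tauto
    · intro x hxu hxv
      refine ndeg_congr _ G x ?_
      ext b
      show _ ∨ _ ↔ _
      simp only [SimpleGraph.mem_neighborSet]
      constructor
      · intro h; tauto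
      · intro h; tauto
  · -- u ~ v : need a 2-switch
    set S : Set V := G.neighborSet u ∪ G.neighborSet v with hS
    have huS : u ∈ S := Or.inr hadj.symm
    have hvS : v ∈ S := Or.inl hadj
    -- find an edge disjoint from S
    have hedge : ∃ w z, G.Adj w z ∧ w ∉ S ∧ z ∉ S := by
      by_contra hcon
      push_neg at hcon
      have hmeet : ∀ a b : V, G.Adj a b → a ∈ S ∨ b ∈ S := by
        intro a b h
        by_cases haS : a ∈ S
        · exact Or.inl haS
        · exact Or.inr (hcon a b h haS)
      have hFSfin : S.Finite := Set.toFinite S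
      set FS : Finset V := hFSfin.toFinset with hFS
      have hmemFS : ∀ x, x ∈ FS ↔ x ∈ S := fun x => Set.Finite.mem_toFinset _
      have hpick : ∀ x : V, ∃ y : V, x ∉ S → (G.Adj x y ∧ y ∈ S) := by
        intro x
        by_cases hx : x ∈ S
        · exact ⟨u, fun h => absurd hx h⟩
        · have h1 : (G.neighborSet x).Nonempty := by
            rw [← Set.ncard_pos (Set.toFinite _)]
            exact hpos x
          obtain ⟨y, hy⟩ := h1
          have hy' : G.Adj x y := hy
          rcases hmeet x y hy' with h | h
          · exact absurd h hx
          · exact ⟨y, fun _ => ⟨hy', h⟩⟩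
      choose f hf using hpick
      set OUT : Finset V := Finset.univ \ FS with hOUT
      have hmap : ∀ x ∈ OUT, f x ∈ (FS.erase u).erase v := by
        intro x hx
        have hxS : x ∉ S := by
          rw [hOUT, Finset.mem_sdiff] at hx
          rw [← hmemFS]
          exact hx.2
        obtain ⟨hfadj, hfS⟩ := hf x hxS
        have hfu : f x ≠ u := by
          rintro rfl
          exact hxS (Or.inl hfadj.symm)
        have hfv : f x ≠ v := by
          rintro rfl
          exact hxS (Or.inr hfadj.symm)
        exact Finset.mem_erase.mpr ⟨hfv, Finset.mem_erase.mpr ⟨hfu, (hmemFS _).mpr hfS⟩⟩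
      have hcount := Finset.card_eq_sum_card_fiberwise hmap
      have hfiber : ∀ b ∈ (FS.erase u).erase v,
          (OUT.filter fun x => f x = b).card ≤ d2 - 1 := by
        intro b hb
        obtain ⟨hbv, hbu, hbFS⟩ : b ≠ v ∧ b ≠ u ∧ b ∈ FS := by
          rcases Finset.mem_erase.mp hb with ⟨h1, h2⟩
          rcases Finset.mem_erase.mp h2 with ⟨h3, h4⟩
          exact ⟨h1, h3, h4⟩
        have hbS : b ∈ S := (hmemFS _).mp hbFS
        obtain ⟨c, hcuv, hcb⟩ : ∃ c, (c = u ∨ c = v) ∧ c ∈ G.neighborSet b := by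
          rcases hbS with h | h
          · exact ⟨u, Or.inl rfl, SimpleGraph.Adj.symm h⟩
          · exact ⟨v, Or.inr rfl, SimpleGraph.Adj.symm h⟩
        have hsub : (OUT.filter fun x => f x = b)
            ⊆ ((G.neighborSet b).toFinite.toFinset).erase c := by
          intro x hx
          rcases Finset.mem_filter.mp hx with ⟨hxOUT, hxf⟩
          have hxS : x ∉ S := by
            rw [hOUT, Finset.mem_sdiff] at hxOUT
            rw [← hmemFS]; exact hxOUT.2
          obtain ⟨hfadj, -⟩ := hf x hxS
          refine Finset.mem_erase.mpr ⟨?_, ?_⟩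
          · rintro rfl
            rcases hcuv with rfl | rfl
            · exact hxS huS
            · exact hxS hvS
          · rw [Set.Finite.mem_toFinset]
            subst hxf
            exact hfadj.symm
        have h1 : (((G.neighborSet b).toFinite.toFinset).erase c).card
            = ndeg G b - 1 := by
          rw [Finset.card_erase_of_mem (by rwa [Set.Finite.mem_toFinset]), ndeg,
            Set.ncard_eq_toFinset_card _ (Set.toFinite _)]
        calc (OUT.filter fun x => f x = b).card ≤ _ := Finset.card_le_card hsub
          _ = ndeg G b - 1 := h1
          _ ≤ d2 - 1 := Nat.sub_le_sub_right (hother b hbu hbv) 1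
      have hOUTcard : OUT.card = Fintype.card V - FS.card := by
        rw [hOUT, Finset.card_sdiff_of_subset (Finset.subset_univ _), Finset.card_univ]
      have hT : ((FS.erase u).erase v).card = FS.card - 2 := by
        rw [Finset.card_erase_of_mem, Finset.card_erase_of_mem]
        · rfl
        · exact (hmemFS _).mpr huS
        · exact Finset.mem_erase.mpr ⟨huv.symm, (hmemFS _).mpr hvS⟩
      have hsum : OUT.card ≤ (FS.card - 2) * (d2 - 1) := by
        rw [hcount, ← hT]
        calc ∑ b ∈ (FS.erase u).erase v, (OUT.filter fun x => f x = b).card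
            ≤ ∑ _b ∈ (FS.erase u).erase v, (d2 - 1) :=
              Finset.sum_le_sum hfiber
          _ = ((FS.erase u).erase v).card * (d2 - 1) := by
              rw [Finset.sum_const, smul_eq_mul]
      have hFScard : FS.card ≤ ndeg G u + ndeg G v := by
        rw [hFS]
        have h2 : S.ncard ≤ ndeg G u + ndeg G v := Set.ncard_union_le _ _
        rwa [Set.ncard_eq_toFinset_card _ hFSfin] at h2
      have hbig : Fintype.card V ≤ FS.card + (FS.card - 2) * (d2 - 1) := by
        have h3 := hOUTcard ▸ hsum
        have hFSle : FS.card ≤ Fintype.card V := by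
          rw [← Finset.card_univ]; exact Finset.card_le_card (Finset.subset_univ _)
        omega
      have hmono : FS.card + (FS.card - 2) * (d2 - 1)
          ≤ (ndeg G u + ndeg G v) + (ndeg G u + ndeg G v - 2) * (d2 - 1) := by
        have h2 : FS.card - 2 ≤ ndeg G u + ndeg G v - 2 := Nat.sub_le_sub_right hFScard 2
        exact Nat.add_le_add hFScard (Nat.mul_le_mul_right _ h2)
      omega
    obtain ⟨w, z, hwz, hwS, hzS⟩ := hedge
    -- distinctness and non-adjacency facts, in all needed orientations
    have hwu : w ≠ u := fun h => hwS (h ▸ huS)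
    have hwv : w ≠ v := fun h => hwS (h ▸ hvS)
    have hzu : z ≠ u := fun h => hzS (h ▸ huS)
    have hzv : z ≠ v := fun h => hzS (h ▸ hvS)
    have huw : u ≠ w := hwu.symm
    have huz : u ≠ z := hzu.symm
    have hvw : v ≠ w := hwv.symm
    have hvz : v ≠ z := hzv.symm
    have hwznd : w ≠ z := hwz.ne
    have hzwnd : z ≠ w := hwz.ne'
    have hvu : v ≠ u := huv.symm
    have hnuw : ¬ G.Adj u w := fun h => hwS (Or.inl h)
    have hnvz : ¬ G.Adj v z := fun h => hzS (Or.inr h)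
    have hnwu : ¬ G.Adj w u := fun h => hnuw h.symm
    have hnzv : ¬ G.Adj z v := fun h => hnvz h.symm
    have hzw : G.Adj z w := hwz.symm
    refine ⟨⟨fun a b =>
        (G.Adj a b ∧ ¬((a = w ∧ b = z) ∨ (a = z ∧ b = w)))
        ∨ ((a = u ∧ b = w) ∨ (a = w ∧ b = u))
        ∨ ((a = v ∧ b = z) ∨ (a = z ∧ b = v)), ?_, ?_⟩, ?_, ?_, ?_⟩
    · constructor; intro a b h
      rcases h with ⟨h1, h2⟩ | h | h
      · exact Or.inl ⟨h1.symm, fun hc => h2 (by tauto)⟩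
      · exact Or.inr (Or.inl (by tauto))
      · exact Or.inr (Or.inr (by tauto))
    · constructor; intro a h
      rcases h with ⟨h1, -⟩ | (⟨rfl, h⟩ | ⟨rfl, h⟩) | (⟨rfl, h⟩ | ⟨rfl, h⟩)
      · exact G.loopless.irrefl a h1
      · exact huw h
      · exact hwu h
      · exact hvz h
      · exact hzv h
    · -- degree of u
      refine ndeg_insert _ G u w hnuw ?_
      ext b
      show _ ∨ _ ↔ _
      simp only [Set.mem_insert_iff, SimpleGraph.mem_neighborSet]
      constructor
      · intro h; tauto
      · intro h; tauto
    · -- degree of v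
      refine ndeg_insert _ G v z hnvz ?_
      ext b
      show _ ∨ _ ↔ _
      simp only [Set.mem_insert_iff, SimpleGraph.mem_neighborSet]
      constructor
      · intro h; tauto
      · intro h; tauto
    · -- other degrees
      intro x hxu hxv
      by_cases hxw : x = w
      · subst hxw
        refine ndeg_exchange _ G x u z hnwu hwz ?_
        ext b
        show _ ∨ _ ↔ _
        simp only [Set.mem_insert_iff, Set.mem_diff, Set.mem_singleton_iff,
          SimpleGraph.mem_neighborSet]
        constructor
        · intro h; tauto
        · intro h; tauto
      · by_cases hxz : x = z
        · subst hxz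
          refine ndeg_exchange _ G x v w hnzv hzw ?_
          ext b
          show _ ∨ _ ↔ _
          simp only [Set.mem_insert_iff, Set.mem_diff, Set.mem_singleton_iff,
            SimpleGraph.mem_neighborSet]
          constructor
          · intro h; tauto
          · intro h; tauto
        · refine ndeg_congr _ G x ?_
          ext b
          show _ ∨ _ ↔ _
          simp only [SimpleGraph.mem_neighborSet]
          constructor
          · intro h; tauto
          · intro h; tauto


lemma map_cons_inv {α β : Type*} [DecidableEq α] (s : Multiset α) (f : α → β) (a : β)
    (M : Multiset β) (h : s.map f = a ::ₘ M) :
    ∃ x s', s = x ::ₘ s' ∧ f x = a ∧ s'.map f = M := by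
  have ha : a ∈ s.map f := h ▸ Multiset.mem_cons_self a M
  rcases Multiset.mem_map.mp ha with ⟨x, hx, hfx⟩
  refine ⟨x, s.erase x, (Multiset.cons_erase hx).symm, hfx, ?_⟩
  have h2 : s.map f = f x ::ₘ (s.erase x).map f := by
    conv_lhs => rw [← Multiset.cons_erase hx]
    rw [Multiset.map_cons]
  rw [h, hfx] at h2
  exact ((Multiset.cons_inj_right a).mp h2).symm


/-- Core realization lemma: any bounded positive multiset with even sum and enough
entries is graphic. -/
theorem lemmaA (d : ℕ) : ∀ (N : ℕ) (D : Multiset ℕ), D.sum ≤ N →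
    (∀ a ∈ D, 1 ≤ a ∧ a ≤ d) → Even D.sum → 2 * (d - 1) ^ 2 + 1 ≤ Multiset.card D →
    ∃ (W : Type) (_ : Fintype W) (G : SimpleGraph W), degreeMultiset G = D := by
  intro N
  induction N with
  | zero =>
    intro D hsum h1 h2 h3
    exfalso
    have hcard : 1 ≤ Multiset.card D := le_trans (by omega) h3
    obtain ⟨a, ha⟩ := Multiset.card_pos_iff_exists_mem.mp hcard
    have hz : D.sum = 0 := by omega
    have := Multiset.sum_eq_zero_iff.mp hz a ha
    have := (h1 a ha).1
    omega
  | succ N ih =>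
    intro D hsum h1 h2 h3
    set L := D.sort (· ≥ ·) with hL
    have hLs : List.Pairwise (· ≥ ·) L := Multiset.pairwise_sort _ _
    have hLD : (L : Multiset ℕ) = D := Multiset.sort_eq _ _
    have hlen : Multiset.card D = L.length := by rw [← hLD]; simp
    match hLL : L with
    | [] =>
      exfalso
      rw [List.length_nil] at hlen
      omega
    | [d1] =>
      exfalso
      rw [List.length_singleton] at hlen
      have hd1 : d1 ∈ D := by rw [← hLD]; simp
      have hsq : (d - 1) ^ 2 = 0 := by omega
      have hd0 : d - 1 = 0 := by
        by_contra hc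
        have : 1 ≤ (d - 1) ^ 2 := Nat.one_le_iff_ne_zero.mpr (pow_ne_zero 2 hc)
        omega
      have h4 := h1 d1 hd1
      have hDsum : D.sum = d1 := by rw [← hLD]; simp
      rw [hDsum] at h2
      obtain ⟨t, ht⟩ := h2
      omega
    | d1 :: d2 :: rest =>
      have hD : D = d1 ::ₘ d2 ::ₘ (rest : Multiset ℕ) := by
        rw [← hLD]; simp
      have hd12 : d2 ≤ d1 := by
        rcases List.pairwise_cons.mp hLs with ⟨hall, -⟩
        exact hall d2 List.mem_cons_self
      have hrest : ∀ a ∈ rest, a ≤ d2 := by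
        rcases List.pairwise_cons.mp hLs with ⟨-, h5⟩
        rcases List.pairwise_cons.mp h5 with ⟨hall, -⟩
        exact hall
      have hd1D : d1 ∈ D := by rw [hD]; simp
      have hd2D : d2 ∈ D := by rw [hD]; simp
      have hd1b := h1 d1 hd1D
      have hd2b := h1 d2 hd2D
      have hDsum : D.sum = d1 + d2 + (rest : Multiset ℕ).sum := by
        rw [hD]; simp [Multiset.sum_cons]; ring
      by_cases hbase : d2 ≤ 1
      · -- base: at most one entry exceeds 1: star plus matching
        have hd2e : d2 = 1 := le_antisymm hbase hd2b.1
        have hrest1 : ∀ a ∈ rest, a = 1 := by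
          intro a ha
          have := hrest a ha
          have := (h1 a (by rw [hD]; simp [Multiset.mem_cons]; tauto)).1
          omega
        have hrepl : (rest : Multiset ℕ) = Multiset.replicate rest.length 1 := by
          rw [Multiset.eq_replicate]
          exact ⟨by simp, fun b hb => hrest1 b (by simpa using hb)⟩
        set k := rest.length + 1 with hk
        have hDr : D = d1 ::ₘ Multiset.replicate k 1 := by
          rw [hD, hrepl, hd2e, hk, Multiset.replicate_succ]
        -- need d1 ≤ k and k - d1 even
        have hcard2 : Multiset.card D = k + 1 := by rw [hlen]; simp [hk]
        have hd1k : d1 ≤ k := by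
          rcases Nat.lt_or_ge d 2 with hdlt | hdge
          · omega
          · have h6 : d - 1 ≤ (d - 1) ^ 2 := Nat.le_self_pow (by norm_num) _
            omega
        have hpar : Even (k - d1) := by
          have hDsum2 : D.sum = d1 + k := by
            rw [hDr]; simp [Multiset.sum_cons, Multiset.sum_replicate]
          rw [hDsum2] at h2
          obtain ⟨t, ht⟩ := h2
          obtain ⟨m, hm⟩ : ∃ m, k - d1 = 2 * m := ⟨(k - d1) / 2, by omega⟩
          exact ⟨m, by omega⟩
        obtain ⟨m, hm⟩ := hpar
        refine ⟨(Unit ⊕ Fin d1) ⊕ (Fin m × Fin 2), inferInstance, starG d1 ⊕g matchG m, ?_⟩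
        rw [degreeMultiset_sum, degreeMultiset_starG, degreeMultiset_matchG, hDr]
        rw [Multiset.cons_add, ← Multiset.replicate_add]
        congr 2
        omega
      · -- inductive step: reduce the two largest entries
        have hd22 : 2 ≤ d2 := by omega
        have hd2d : 2 ≤ d := le_trans hd22 hd2b.2
        set D' : Multiset ℕ := (d1 - 1) ::ₘ (d2 - 1) ::ₘ (rest : Multiset ℕ) with hD'
        have hsum' : D'.sum = D.sum - 2 := by
          rw [hD', hDsum]
          simp [Multiset.sum_cons]
          omega
        have hsumD2 : 2 ≤ D.sum := by omega
        have h2' : Even D'.sum := by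
          obtain ⟨t, ht⟩ := h2
          exact ⟨t - 1, by omega⟩
        have hcard' : Multiset.card D' = Multiset.card D := by
          rw [hD', hD]; simp
        obtain ⟨W, hW, G', hG'⟩ := ih D' (by omega)
          (by
            intro a ha
            rw [hD'] at ha
            rcases Multiset.mem_cons.mp ha with rfl | ha
            · omega
            rcases Multiset.mem_cons.mp ha with rfl | ha
            · omega
            · exact h1 a (by rw [hD]; simp [Multiset.mem_cons]; tauto))
          h2' (by omega)
        classical
        -- extract the two special vertices
        rw [degreeMultiset_def] at hG'
        obtain ⟨u, s1, hs1, hu, hmap1⟩ := map_cons_inv _ _ _ _ hG'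
        obtain ⟨v, s2, hs2, hv, hmap2⟩ := map_cons_inv _ _ _ _ hmap1
        have hnodup : (u ::ₘ v ::ₘ s2).Nodup := by
          rw [← hs2, ← hs1]
          exact Finset.univ.nodup
        have huv : u ≠ v := by
          rcases Multiset.nodup_cons.mp hnodup with ⟨hu1, -⟩
          exact fun h => hu1 (h ▸ Multiset.mem_cons_self _ _)
        have hus2 : u ∉ s2 := by
          rcases Multiset.nodup_cons.mp hnodup with ⟨hu1, -⟩
          exact fun h => hu1 (Multiset.mem_cons_of_mem h)
        have hvs2 : v ∉ s2 := by
          rcases Multiset.nodup_cons.mp hnodup with ⟨-, h6⟩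
          exact (Multiset.nodup_cons.mp h6).1
        have hmem2 : ∀ w : W, w ≠ u → w ≠ v → w ∈ s2 := by
          intro w hwu hwv
          have : w ∈ (Finset.univ : Finset W).val := Finset.mem_univ_val _
          rw [hs1, hs2] at this
          rcases Multiset.mem_cons.mp this with rfl | h6
          · exact absurd rfl hwu
          rcases Multiset.mem_cons.mp h6 with rfl | h7
          · exact absurd rfl hwv
          · exact h7
        have hother : ∀ w, w ≠ u → w ≠ v → ndeg G' w ≤ d2 := by
          intro w hwu hwv
          have h6 : ndeg G' w ∈ Multiset.map (ndeg G') s2 :=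
            Multiset.mem_map_of_mem _ (hmem2 w hwu hwv)
          rw [hmap2] at h6
          have := hrest _ (by simpa using h6)
          omega
        have hpos : ∀ w, 1 ≤ ndeg G' w := by
          intro w
          have h6 : ndeg G' w ∈ Finset.univ.val.map (ndeg G') :=
            Multiset.mem_map_of_mem _ (Finset.mem_univ_val _)
          rw [hG'] at h6
          rw [hD'] at h6
          rcases Multiset.mem_cons.mp h6 with h7 | h6
          · omega
          rcases Multiset.mem_cons.mp h6 with h7 | h6
          · omega
          · have h8 : ndeg G' w ∈ D := by
              rw [hD]
              exact Multiset.mem_cons_of_mem (Multiset.mem_cons_of_mem h6)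
            have := (h1 _ h8).1
            omega
        have hcardW : Fintype.card W = Multiset.card D := by
          have := card_degreeMultiset G'
          rw [degreeMultiset_def, hG', hcard'] at this
          omega
        have hswapcard : ndeg G' u + ndeg G' v
            + (ndeg G' u + ndeg G' v - 2) * (d2 - 1) + 1 ≤ Fintype.card W := by
          rw [hcardW, hu, hv]
          obtain ⟨c, rfl⟩ : ∃ c, d = c + 2 := ⟨d - 2, by omega⟩
          have e1 : d1 - 1 + (d2 - 1) ≤ 2 * c + 2 := by omega
          have e2 : d1 - 1 + (d2 - 1) - 2 ≤ 2 * c := by omega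
          have e3 : d2 - 1 ≤ c + 1 := by omega
          have e4 : (d1 - 1 + (d2 - 1) - 2) * (d2 - 1) ≤ 2 * c * (c + 1) :=
            Nat.mul_le_mul e2 e3
          have e5 : 2 * (c + 2 - 1) ^ 2 + 1 = 2 * c * (c + 1) + 2 * c + 2 + 1 := by
            have : c + 2 - 1 = c + 1 := by omega
            rw [this]; ring
          have e6 : 2 * (c + 2 - 1) ^ 2 + 1 ≤ Multiset.card D := h3
          omega
        obtain ⟨G₂, hG₂u, hG₂v, hG₂w⟩ :=
          swap_lemma G' u v huv d2 hother hpos hswapcard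
        refine ⟨W, hW, G₂, ?_⟩
        rw [degreeMultiset_def]
        have huniv : (Finset.univ : Finset W).val = u ::ₘ v ::ₘ s2 := by
          rw [hs1, hs2]
        rw [huniv, Multiset.map_cons, Multiset.map_cons]
        have hmapeq : Multiset.map (ndeg G₂) s2 = Multiset.map (ndeg G') s2 := by
          apply Multiset.map_congr rfl
          intro w hw
          have hwu : w ≠ u := fun h => hus2 (h ▸ hw)
          have hwv : w ≠ v := fun h => hvs2 (h ▸ hw)
          exact hG₂w w hwu hwv
        rw [hmapeq, hmap2, hG₂u, hG₂v, hu, hv, hD]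
        congr 2 <;> omega

/-- Realization with small components, by repeatedly splitting off cliques. -/
theorem lemmaM (d : ℕ) (hd : 1 ≤ d) : ∀ (C : ℕ) (D : Multiset ℕ), Multiset.card D ≤ C →
    (∀ a ∈ D, 1 ≤ a ∧ a ≤ d) → Even D.sum → 2 * (d - 1) ^ 2 + 1 ≤ Multiset.card D →
    SmallReal D (3 * d ^ 2) := by
  intro C
  induction C with
  | zero =>
    intro D h0 h1 h2 h3
    omega
  | succ C ih =>
    intro D h0 h1 h2 h3
    by_cases hsmall : Multiset.card D ≤ 3 * d ^ 2
    · obtain ⟨W, hW, G, hG⟩ := lemmaA d D.sum D le_rfl h1 h2 h3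
      have hcardW : Fintype.card W ≤ 3 * d ^ 2 := by
        have hc := card_degreeMultiset G
        rw [hG] at hc
        omega
      have := smallReal_of_card_le G hcardW
      rwa [hG] at this
    · push_neg at hsmall
      have hbig : 3 * d ^ 2 + 1 ≤ Multiset.card D := hsmall
      -- pigeonhole: some value has multiplicity at least 3d+1
      have hex : ∃ a, 1 ≤ a ∧ a ≤ d ∧ 3 * d + 1 ≤ D.count a := by
        by_contra hcon
        push_neg at hcon
        have hsub : D.toFinset ⊆ Finset.Icc 1 d := by
          intro a ha
          rw [Multiset.mem_toFinset] at ha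
          have := h1 a ha
          exact Finset.mem_Icc.mpr this
        have h5 : Multiset.card D = ∑ a ∈ D.toFinset, D.count a :=
          (Multiset.toFinset_sum_count_eq D).symm
        have h6 : ∑ a ∈ D.toFinset, D.count a ≤ ∑ a ∈ Finset.Icc 1 d, D.count a :=
          Finset.sum_le_sum_of_subset hsub
        have h7 : ∑ a ∈ Finset.Icc 1 d, D.count a ≤ ∑ _a ∈ Finset.Icc 1 d, 3 * d := by
          apply Finset.sum_le_sum
          intro a ha
          rcases Finset.mem_Icc.mp ha with ⟨ha1, ha2⟩
          have := hcon a ha1 ha2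
          omega
        have h8 : ∑ _a ∈ Finset.Icc 1 d, 3 * d = d * (3 * d) := by
          rw [Finset.sum_const, smul_eq_mul, Nat.card_Icc]
          norm_num
        have h9 : d * (3 * d) = 3 * d ^ 2 := by ring
        omega
      obtain ⟨a, ha1, had, hacount⟩ := hex
      set chunk : Multiset ℕ := Multiset.replicate (a + 1) a with hchunk
      have hle : chunk ≤ D := by
        rw [Multiset.le_iff_count]
        intro b
        rw [hchunk, Multiset.count_replicate]
        by_cases hab : a = b
        · subst hab; simp; omega
        · simp [hab]
      have hDR : chunk + (D - chunk) = D := add_tsub_cancel_of_le hle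
      set R := D - chunk with hR
      have hcards : Multiset.card chunk + Multiset.card R = Multiset.card D := by
        rw [← hDR]; simp
      have hcardchunk : Multiset.card chunk = a + 1 := by
        rw [hchunk]; simp
      have hsums : chunk.sum + R.sum = D.sum := by
        rw [← hDR]; simp
      have hsumchunk : chunk.sum = (a + 1) * a := by
        rw [hchunk, Multiset.sum_replicate, smul_eq_mul]
      have hevenchunk : Even chunk.sum := by
        rw [hsumchunk, mul_comm]
        exact Nat.even_mul_succ_self a
      have hevenR : Even R.sum := by
        rw [← hsums] at h2
        exact (Nat.even_add.mp h2).mp hevenchunk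
      have hmemR : ∀ b ∈ R, 1 ≤ b ∧ b ≤ d := by
        intro b hb
        exact h1 b (Multiset.mem_of_le (tsub_le_self) hb)
      have hsq : 2 * (d - 1) ^ 2 + d + 1 ≤ 3 * d ^ 2 := by
        obtain ⟨c, rfl⟩ : ∃ c, d = c + 1 := ⟨d - 1, by omega⟩
        have e1 : (c + 1) - 1 = c := by omega
        rw [e1]
        nlinarith [sq_nonneg c]
      have hcardR : 2 * (d - 1) ^ 2 + 1 ≤ Multiset.card R := by omega
      have hRsmall := ih R (by omega) hmemR hevenR hcardR
      have hclique : SmallReal chunk (3 * d ^ 2) := by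
        have hdm := degreeMultiset_top (a + 1)
        have hchunkeq : degreeMultiset (⊤ : SimpleGraph (Fin (a + 1))) = chunk := by
          rw [hdm, hchunk]
          norm_num
        have hcardle : Fintype.card (Fin (a + 1)) ≤ 3 * d ^ 2 := by
          rw [Fintype.card_fin]
          have : d * 1 ≤ d * d := Nat.mul_le_mul_left d hd
          have hdd : d ^ 2 = d * d := sq d
          omega
        have := smallReal_of_card_le (⊤ : SimpleGraph (Fin (a + 1))) hcardle
        rwa [hchunkeq] at this
      have := SmallReal.add hclique hRsmall
      rwa [hDR] at this

end Scratch

/-- A graphic sequence with maximum entry `d 0` has a realization all of whose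
connected components have at most `3 (d 0)²` vertices. -/
theorem stmt4 (n : ℕ) (hn : 0 < n) (d : ℕ → ℕ)
    (hmono : ∀ i j, i ≤ j → j < n → d j ≤ d i)
    (hpos : ∀ i, i < n → 1 ≤ d i)
    (hgraphic : IsGraphic ((Finset.range n).val.map d)) :
    ∃ G : SimpleGraph (Fin n), degreeMultiset G = (Finset.range n).val.map d ∧
      ∀ v : Fin n, {w : Fin n | G.Reachable v w}.ncard ≤ 3 * (d 0) ^ 2 := by
  set D : Multiset ℕ := (Finset.range n).val.map d with hD
  have hcardD : Multiset.card D = n := by rw [hD]; simp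
  have hmem : ∀ a ∈ D, 1 ≤ a ∧ a ≤ d 0 := by
    intro a ha
    rw [hD] at ha
    obtain ⟨i, hi, rfl⟩ := Multiset.mem_map.mp ha
    have hi' : i < n := by simpa using hi
    exact ⟨hpos i hi', hmono 0 i (Nat.zero_le i) hi'⟩
  have hd0 : 1 ≤ d 0 := hpos 0 hn
  have heven : Even D.sum := by
    obtain ⟨m, G, hG⟩ := hgraphic
    rw [← hG]
    exact Scratch.sum_degreeMultiset_even G
  by_cases hsmall : n ≤ 3 * (d 0) ^ 2
  · obtain ⟨m, G, hG⟩ := hgraphic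
    have hthis := Scratch.card_degreeMultiset G
    rw [hG] at hthis
    have hmn : m = n := by
      rw [Fintype.card_fin] at hthis
      omega
    subst hmn
    refine ⟨G, hG, ?_⟩
    intro v
    have h5 := Scratch.reachSet_ncard_le G v
    rw [Fintype.card_fin] at h5
    exact le_trans h5 hsmall
  · push_neg at hsmall
    have hT : 2 * (d 0 - 1) ^ 2 + 1 ≤ Multiset.card D := by
      have h1 : (d 0 - 1) ^ 2 ≤ (d 0) ^ 2 := Nat.pow_le_pow_left (Nat.sub_le _ _) 2
      omega
    have hSR := Scratch.lemmaM (d 0) hd0 (Multiset.card D) D le_rfl hmem heven hT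
    obtain ⟨W, hW, G, hG, hcomp⟩ := hSR
    have hcardW : Fintype.card W = n := by
      have h6 := Scratch.card_degreeMultiset G
      rw [hG] at h6; omega
    obtain ⟨H, hHdm, hHreach⟩ := Scratch.transfer (Fintype.equivFinOfCardEq hcardW) G
    refine ⟨H, by rw [hHdm, hG], ?_⟩
    intro v
    rw [hHreach v]
    exact hcomp _
end

section
/- The relation on graphic sequences defined by D_1 ≤ D_2 if there exist simple graphs G_1 realizing D_1 and G_2 realizing D_2 with G_1 an induced subgraph of G_2, is a partial order (reflexive, antisymmetric, and transitive). -/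
lemma exists_equiv_comp {V W : Type} [Fintype V] [Fintype W] (f : V → ℕ) (g : W → ℕ)
    (h : Multiset.map f Finset.univ.val = Multiset.map g Finset.univ.val) :
    ∃ e : V ≃ W, ∀ v, f v = g (e v) := by
  classical
  have hc : ∀ c, Fintype.card {v // f v = c} = Fintype.card {w // g w = c} := by
    intro c
    have h2 := congrArg (Multiset.count c) h
    rw [Multiset.count_map, Multiset.count_map] at h2
    rw [Fintype.card_subtype, Fintype.card_subtype]
    simp only [Finset.card, Finset.filter_val]
    simpa [eq_comm] using h2
  refine ⟨Equiv.ofFiberEquiv (f := f) (g := g) fun c => Fintype.equivOfCardEq (hc c), ?_⟩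
  intro v; exact (Equiv.ofFiberEquiv_map _ v).symm

lemma degreeMultiset_eq_of_equiv {V W : Type} [Fintype V] [Fintype W]
    (G : SimpleGraph V) (H : SimpleGraph W) (e : V ≃ W)
    (h : ∀ v, (G.neighborSet v).ncard = (H.neighborSet (e v)).ncard) :
    degreeMultiset G = degreeMultiset H := by
  unfold degreeMultiset
  conv_rhs => rw [← Finset.map_univ_equiv e]
  rw [Finset.map_val, Multiset.map_map]
  exact Multiset.map_congr rfl (fun v _ => h v)

lemma card_degreeMultiset {V : Type} [Fintype V] (G : SimpleGraph V) :
    Multiset.card (degreeMultiset G) = Fintype.card V := by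
  simp [degreeMultiset, Finset.card_univ]

lemma degreeMultiset_eq_of_surj {V W : Type} [Fintype V] [Fintype W]
    (G : SimpleGraph V) (H : SimpleGraph W) (f : V ↪ W) (hsurj : Function.Surjective f)
    (hadj : ∀ u v, G.Adj u v ↔ H.Adj (f u) (f v)) :
    degreeMultiset G = degreeMultiset H := by
  refine degreeMultiset_eq_of_equiv G H (Equiv.ofBijective f ⟨f.injective, hsurj⟩) ?_
  intro v
  have himg : H.neighborSet (f v) = f '' G.neighborSet v := by
    ext w
    obtain ⟨u, rfl⟩ := hsurj w
    simp only [SimpleGraph.mem_neighborSet, Set.mem_image]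
    constructor
    · intro hw
      exact ⟨u, (hadj v u).2 hw, rfl⟩
    · rintro ⟨w, hw, hfe⟩
      obtain rfl := f.injective hfe
      exact (hadj v w).1 hw
  show (G.neighborSet v).ncard = (H.neighborSet (f v)).ncard
  rw [himg, Set.ncard_image_of_injective _ f.injective]

/-- The Rao order on graphic sequences is reflexive, antisymmetric and transitive. -/
theorem stmt5 :
    (∀ D : Multiset ℕ, IsGraphic D → RaoLE D D) ∧
    (∀ D₁ D₂ : Multiset ℕ, RaoLE D₁ D₂ → RaoLE D₂ D₁ → D₁ = D₂) ∧
    (∀ D₁ D₂ D₃ : Multiset ℕ, RaoLE D₁ D₂ → RaoLE D₂ D₃ → RaoLE D₁ D₃) := by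
  refine ⟨?_, ?_, ?_⟩
  · rintro D ⟨n, G, hG⟩
    exact ⟨n, n, G, G, Function.Embedding.refl _, hG, hG, fun u v => Iff.rfl⟩
  · rintro D₁ D₂ ⟨m, n, G, H, f, hG, hH, hadj⟩ ⟨m', n', G', H', f', hG', hH', hadj'⟩
    have hm : Multiset.card D₁ = m := by rw [← hG, card_degreeMultiset, Fintype.card_fin]
    have hn : Multiset.card D₂ = n := by rw [← hH, card_degreeMultiset, Fintype.card_fin]
    have hm' : Multiset.card D₂ = m' := by rw [← hG', card_degreeMultiset, Fintype.card_fin]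
    have hn' : Multiset.card D₁ = n' := by rw [← hH', card_degreeMultiset, Fintype.card_fin]
    have h1 : m ≤ n := by
      have := Fintype.card_le_of_embedding f; simpa using this
    have h2 : m' ≤ n' := by
      have := Fintype.card_le_of_embedding f'; simpa using this
    have hmn : m = n := by omega
    subst hmn
    have hsurj : Function.Surjective f :=
      (Finite.injective_iff_surjective.1 f.injective)
    rw [← hG, ← hH]
    exact degreeMultiset_eq_of_surj G H f hsurj hadj
  · rintro D₁ D₂ D₃ ⟨m, n, G, H, f, hG, hH, hadj⟩ ⟨n', p, H', K, g, hH', hK, hadj'⟩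
    classical
    have hnn : n = n' := by
      have h1 : Multiset.card D₂ = n := by rw [← hH, card_degreeMultiset, Fintype.card_fin]
      have h2 : Multiset.card D₂ = n' := by rw [← hH', card_degreeMultiset, Fintype.card_fin]
      omega
    subst hnn
    -- degrees of H and H' agree up to a permutation e
    obtain ⟨e, he⟩ := exists_equiv_comp
      (fun v => ((H.neighborSet v).ncard : ℕ)) (fun v => ((H'.neighborSet v).ncard : ℕ))
      (by
        have : degreeMultiset H = degreeMultiset H' := by rw [hH, hH']
        simpa [degreeMultiset] using this)
    set g' : Fin n ↪ Fin p := e.toEmbedding.trans g with hg'def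
    have hg'coe : ∀ u, g' u = g (e u) := fun u => rfl
    have hg'range : ∀ u : Fin n, (g' u : Fin p) ∈ Set.range (⇑g) := fun u => ⟨e u, rfl⟩
    -- the modified host graph
    set K' : SimpleGraph (Fin p) :=
      { Adj := fun x y =>
          (∃ u v : Fin n, x = g' u ∧ y = g' v ∧ H.Adj u v) ∨
          (K.Adj x y ∧ (x ∉ Set.range (⇑g) ∨ y ∉ Set.range (⇑g)))
        symm := by
          constructor
          rintro x y (⟨u, v, hx, hy, huv⟩ | ⟨hxy, ho⟩)
          · exact Or.inl ⟨v, u, hy, hx, huv.symm⟩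
          · exact Or.inr ⟨hxy.symm, ho.symm⟩
        loopless := by
          constructor
          rintro x (⟨u, v, hx, hy, huv⟩ | ⟨hxy, _⟩)
          · exact huv.ne (g'.injective (hx.symm.trans hy))
          · exact hxy.ne rfl } with hK'def
    have hK'adj : ∀ x y, K'.Adj x y ↔
        ((∃ u v : Fin n, x = g' u ∧ y = g' v ∧ H.Adj u v) ∨
          (K.Adj x y ∧ (x ∉ Set.range (⇑g) ∨ y ∉ Set.range (⇑g)))) := fun x y => Iff.rfl
    -- K' is an induced extension of H via g'
    have hind : ∀ u v : Fin n, H.Adj u v ↔ K'.Adj (g' u) (g' v) := by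
      intro u v
      rw [hK'adj]
      constructor
      · intro h; exact Or.inl ⟨u, v, rfl, rfl, h⟩
      · rintro (⟨a, b, ha, hb, hab⟩ | ⟨_, ho⟩)
        · cases g'.injective ha; cases g'.injective hb; exact hab
        · rcases ho with h | h
          · exact absurd (hg'range u) h
          · exact absurd (hg'range v) h
    -- K' has the same degrees as K
    have hdeg : ∀ x : Fin p, (K'.neighborSet x).ncard = (K.neighborSet x).ncard := by
      intro x
      by_cases hx : x ∈ Set.range (⇑g)
      · obtain ⟨w, rfl⟩ := hx
        set u : Fin n := e.symm w with hu
        have hgw : g w = g' u := by rw [hg'coe, hu, Equiv.apply_symm_apply]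
        have hNK' : K'.neighborSet (g w) =
            (⇑g' '' H.neighborSet u) ∪ {y | K.Adj (g w) y ∧ y ∉ Set.range (⇑g)} := by
          ext y
          simp only [SimpleGraph.mem_neighborSet, hK'adj, Set.mem_union, Set.mem_image,
            Set.mem_setOf_eq]
          constructor
          · rintro (⟨a, b, ha, hb, hab⟩ | ⟨hxy, ho⟩)
            · have : a = u := g'.injective (ha.symm.trans hgw).symm ▸ rfl
              have ha' : a = u := by
                apply g'.injective; rw [← ha, hgw]
              subst ha'
              exact Or.inl ⟨b, hab, hb.symm⟩
            · rcases ho with h | h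
              · exact absurd ⟨w, rfl⟩ h
              · exact Or.inr ⟨hxy, h⟩
          · rintro (⟨b, hb, rfl⟩ | ⟨hxy, hy⟩)
            · exact Or.inl ⟨u, b, hgw, rfl, hb⟩
            · exact Or.inr ⟨hxy, Or.inr hy⟩
        have hNK : K.neighborSet (g w) =
            (⇑g '' H'.neighborSet w) ∪ {y | K.Adj (g w) y ∧ y ∉ Set.range (⇑g)} := by
          ext y
          simp only [SimpleGraph.mem_neighborSet, Set.mem_union, Set.mem_image,
            Set.mem_setOf_eq]
          constructor
          · intro h
            by_cases hy : y ∈ Set.range (⇑g)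
            · obtain ⟨b, rfl⟩ := hy
              exact Or.inl ⟨b, (hadj' w b).2 h, rfl⟩
            · exact Or.inr ⟨h, hy⟩
          · rintro (⟨b, hb, rfl⟩ | ⟨hxy, _⟩)
            · exact (hadj' w b).1 hb
            · exact hxy
        have hdisj1 : Disjoint (⇑g' '' H.neighborSet u)
            {y | K.Adj (g w) y ∧ y ∉ Set.range (⇑g)} := by
          rw [Set.disjoint_left]
          rintro y ⟨b, _, rfl⟩ hy
          exact hy.2 (hg'range b)
        have hdisj2 : Disjoint (⇑g '' H'.neighborSet w)
            {y | K.Adj (g w) y ∧ y ∉ Set.range (⇑g)} := by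
          rw [Set.disjoint_left]
          rintro y ⟨b, _, rfl⟩ hy
          exact hy.2 ⟨b, rfl⟩
        rw [hNK', hNK, Set.ncard_union_eq hdisj1 (Set.toFinite _) (Set.toFinite _),
          Set.ncard_union_eq hdisj2 (Set.toFinite _) (Set.toFinite _),
          Set.ncard_image_of_injective _ g'.injective,
          Set.ncard_image_of_injective _ g.injective]
        have : (H.neighborSet u).ncard = (H'.neighborSet w).ncard := by
          have := he u
          rwa [hu, Equiv.apply_symm_apply] at this
        rw [this]
      · have : K'.neighborSet x = K.neighborSet x := by
          ext y
          simp only [SimpleGraph.mem_neighborSet, hK'adj]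
          constructor
          · rintro (⟨a, b, ha, hb, hab⟩ | ⟨hxy, _⟩)
            · exact absurd (ha ▸ hg'range a) hx
            · exact hxy
          · intro h; exact Or.inr ⟨h, Or.inl hx⟩
        rw [this]
    have hK' : degreeMultiset K' = D₃ := by
      rw [← hK]
      exact degreeMultiset_eq_of_equiv K' K (Equiv.refl _) (fun v => hdeg v)
    exact ⟨m, p, G, K', f.trans g', hG, hK', fun u v =>
      (hadj u v).trans (hind (f u) (f v))⟩
end

section
/- Let N be a fixed positive integer. If D_1, D_2, ... is an infinite sequence of graphic sequences in which no entry of any D_i exceeds N, then there exist indices i < j such that D_i ≤ D_j, where ≤ means some realization of D_i is an induced subgraph of some realization of D_j. -/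
/-- disjoint union of graphs -/
def gsum {V W : Type} (G : SimpleGraph V) (H : SimpleGraph W) : SimpleGraph (V ⊕ W) where
  Adj x y := match x, y with
    | .inl a, .inl b => G.Adj a b
    | .inr a, .inr b => H.Adj a b
    | _, _ => False
  symm := ⟨by rintro (a|a) (b|b) h <;> simp_all [SimpleGraph.adj_comm]⟩
  loopless := ⟨by rintro (a|a) h <;> simp_all⟩

lemma gsum_nbhd_inl {V W : Type} (G : SimpleGraph V) (H : SimpleGraph W) (a : V) :
    (gsum G H).neighborSet (.inl a) = Sum.inl '' (G.neighborSet a) := by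
  ext (x|x) <;> simp [gsum, SimpleGraph.neighborSet]

lemma gsum_nbhd_inr {V W : Type} (G : SimpleGraph V) (H : SimpleGraph W) (a : W) :
    (gsum G H).neighborSet (.inr a) = Sum.inr '' (H.neighborSet a) := by
  ext (x|x) <;> simp [gsum, SimpleGraph.neighborSet]

lemma degreeMultiset_gsum {V W : Type} [Fintype V] [Fintype W]
    (G : SimpleGraph V) (H : SimpleGraph W) :
    degreeMultiset (gsum G H) = degreeMultiset G + degreeMultiset H := by
  unfold degreeMultiset
  have : (Finset.univ : Finset (V ⊕ W)).val
      = (Finset.univ.val.map Sum.inl) + (Finset.univ.val.map Sum.inr) := by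
    rfl
  rw [this, Multiset.map_add, Multiset.map_map, Multiset.map_map]
  congr 1
  · apply Multiset.map_congr rfl
    intro a _
    simp only [Function.comp_apply, gsum_nbhd_inl]
    exact Set.ncard_image_of_injective _ Sum.inl_injective
  · apply Multiset.map_congr rfl
    intro a _
    simp only [Function.comp_apply, gsum_nbhd_inr]
    exact Set.ncard_image_of_injective _ Sum.inr_injective

lemma degreeMultiset_comap {V W : Type} [Fintype V] [Fintype W] (e : W ≃ V)
    (G : SimpleGraph V) : degreeMultiset (G.comap e) = degreeMultiset G := by
  unfold degreeMultiset
  have h1 : ∀ a : W, ((G.comap e).neighborSet a).ncard = (G.neighborSet (e a)).ncard := by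
    intro a
    have : (G.comap e).neighborSet a = e ⁻¹' (G.neighborSet (e a)) := by
      ext x; simp [SimpleGraph.neighborSet, SimpleGraph.comap]
    have h2 : ⇑e ⁻¹' (G.neighborSet (e a)) = e.symm '' (G.neighborSet (e a)) := by
      ext x; simp [Equiv.symm_apply_eq, eq_comm]
    rw [this, h2, Set.ncard_image_of_injective _ e.symm.injective]
  calc (Finset.univ : Finset W).val.map (fun a => ((G.comap e).neighborSet a).ncard)
      = (Finset.univ : Finset W).val.map (fun a => (G.neighborSet (e a)).ncard) :=
        Multiset.map_congr rfl (fun a _ => h1 a)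
    _ = ((Finset.univ : Finset W).val.map e).map (fun v => (G.neighborSet v).ncard) := by
        rw [Multiset.map_map]; rfl
    _ = (Finset.univ : Finset V).val.map (fun v => (G.neighborSet v).ncard) := by
        congr 1
        have := Finset.map_univ_equiv e
        rw [← this]; rfl

/-- transport: any finite realization gives graphicness -/
lemma isGraphic_of_graph {V : Type} [Fintype V] (G : SimpleGraph V) :
    IsGraphic (degreeMultiset G) := by
  classical
  refine ⟨Fintype.card V, G.comap (Fintype.equivFin V).symm, ?_⟩
  exact degreeMultiset_comap (Fintype.equivFin V).symm G

lemma isGraphic_add {A B : Multiset ℕ} (hA : IsGraphic A) (hB : IsGraphic B) :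
    IsGraphic (A + B) := by
  obtain ⟨m, G, hG⟩ := hA
  obtain ⟨n, H, hH⟩ := hB
  have := isGraphic_of_graph (gsum G H)
  rwa [degreeMultiset_gsum, hG, hH] at this

lemma isGraphic_zero : IsGraphic 0 := ⟨0, ⊥, rfl⟩

lemma isGraphic_replicate_zero (z : ℕ) : IsGraphic (Multiset.replicate z 0) := by
  refine ⟨z, ⊥, ?_⟩
  unfold degreeMultiset
  have : ∀ v : Fin z, ((⊥ : SimpleGraph (Fin z)).neighborSet v).ncard = 0 := by
    intro v; simp [SimpleGraph.neighborSet]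
  calc (Finset.univ : Finset (Fin z)).val.map (fun v => ((⊥ : SimpleGraph (Fin z)).neighborSet v).ncard)
      = (Finset.univ : Finset (Fin z)).val.map (fun _ => 0) :=
        Multiset.map_congr rfl (fun v _ => this v)
    _ = Multiset.replicate z 0 := by
        rw [Multiset.map_const']; simp

/-- complete bipartite gadget: exactly 2d vertices of degree d -/
def Kdd (d : ℕ) : SimpleGraph (Fin d ⊕ Fin d) where
  Adj x y := x.isLeft ≠ y.isLeft
  symm := ⟨fun x y h => h.symm⟩
  loopless := ⟨fun x h => h rfl⟩

lemma Kdd_degreeMultiset (d : ℕ) :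
    degreeMultiset (Kdd d) = Multiset.replicate (2 * d) d := by
  unfold degreeMultiset
  have key : ∀ v : Fin d ⊕ Fin d, ((Kdd d).neighborSet v).ncard = d := by
    rintro (a|a)
    · have : (Kdd d).neighborSet (.inl a) = Sum.inr '' (Set.univ : Set (Fin d)) := by
        ext (x|x) <;> simp [Kdd, SimpleGraph.neighborSet]
      rw [this, Set.ncard_image_of_injective _ Sum.inr_injective]
      simp [Set.ncard_univ]
    · have : (Kdd d).neighborSet (.inr a) = Sum.inl '' (Set.univ : Set (Fin d)) := by
        ext (x|x) <;> simp [Kdd, SimpleGraph.neighborSet]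
      rw [this, Set.ncard_image_of_injective _ Sum.inl_injective]
      simp [Set.ncard_univ]
  calc (Finset.univ : Finset (Fin d ⊕ Fin d)).val.map (fun v => ((Kdd d).neighborSet v).ncard)
      = (Finset.univ : Finset (Fin d ⊕ Fin d)).val.map (fun _ => d) :=
        Multiset.map_congr rfl (fun v _ => key v)
    _ = Multiset.replicate (2 * d) d := by
        rw [Multiset.map_const']
        simp [Fintype.card_sum, two_mul]

lemma isGraphic_replicate_mul (d t : ℕ) :
    IsGraphic (Multiset.replicate (2 * d * t) d) := by
  induction t with
  | zero => simpa using isGraphic_zero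
  | succ t ih =>
      have : Multiset.replicate (2 * d * (t + 1)) d
          = Multiset.replicate (2 * d * t) d + Multiset.replicate (2 * d) d := by
        rw [← Multiset.replicate_add]; ring_nf
      rw [this]
      exact isGraphic_add ih (by rw [← Kdd_degreeMultiset]; exact isGraphic_of_graph _)


lemma raoLE_add {A E : Multiset ℕ} (hA : IsGraphic A) (hE : IsGraphic E) :
    RaoLE A (A + E) := by
  obtain ⟨m, G, hG⟩ := hA
  obtain ⟨k, K, hK⟩ := hE
  classical
  set e : Fin m ⊕ Fin k ≃ Fin (m + k) := finSumFinEquiv with he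
  refine ⟨m, m + k, G, (gsum G K).comap e.symm, ⟨fun u => e (Sum.inl u), fun u v h => ?_⟩,
    hG, ?_, ?_⟩
  · exact Sum.inl_injective (e.injective h)
  · rw [degreeMultiset_comap e.symm (gsum G K), degreeMultiset_gsum, hG, hK]
  · intro u v
    simp only [SimpleGraph.comap_adj, Function.Embedding.coeFn_mk, Equiv.symm_apply_apply]
    show G.Adj u v ↔ (gsum G K).Adj (e.symm (e (Sum.inl u))) (e.symm (e (Sum.inl v)))
    rw [Equiv.symm_apply_apply, Equiv.symm_apply_apply]
    rfl


/-- Bounded case of S. B. Rao's conjecture. -/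
theorem stmt7 (N : ℕ) (hN : 0 < N) (D : ℕ → Multiset ℕ)
    (hgraphic : ∀ i, IsGraphic (D i))
    (hbdd : ∀ i, ∀ x ∈ D i, x ≤ N) :
    ∃ i j, i < j ∧ RaoLE (D i) (D j) := by
  classical
  set K := 2 * N.factorial with hKdef
  have hKpos : 0 < K := by positivity
  haveI : NeZero K := ⟨hKpos.ne'⟩
  set c : ℕ → ℕ → ℕ := fun i d => Multiset.count d (D i) with hc
  set f : ℕ → Fin (N+1) → ℕ := fun i d => c i d.val with hf
  have hpwo : (Set.univ : Set (Fin (N+1) → ℕ)).IsPWO :=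
    Set.isPWO_univ_iff.2 inferInstance
  obtain ⟨g, hg⟩ := hpwo.exists_monotone_subseq (f := f) (fun n => Set.mem_univ _)
  set r : ℕ → (Fin (N+1) → ZMod K) := fun i d => ((c (g i) d.val : ZMod K)) with hr
  obtain ⟨i, j, hne, hreq⟩ := Finite.exists_ne_map_eq_of_infinite r
  wlog hij : i < j generalizing i j
  · exact this j i hne.symm hreq.symm (by omega)
  set I := g i with hI
  set J := g j with hJ
  have hIJ : I < J := g.strictMono hij
  have hle : ∀ d, d ≤ N → c I d ≤ c J d := by
    intro d hd
    have := hg (le_of_lt hij) ⟨d, by omega⟩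
    simpa [hf] using this
  have hdvd : ∀ d, 1 ≤ d → d ≤ N → 2 * d ∣ (c J d - c I d) := by
    intro d h1 h2
    have hres : (c I d : ZMod K) = (c J d : ZMod K) := by
      have := congrFun hreq (⟨d, by omega⟩ : Fin (N+1))
      simpa [hr] using this
    have hmod : c I d ≡ c J d [MOD K] := (ZMod.natCast_eq_natCast_iff _ _ _).1 hres
    have hKd : K ∣ c J d - c I d := (Nat.modEq_iff_dvd' (hle d h2)).1 hmod
    exact dvd_trans (mul_dvd_mul_left 2 (Nat.dvd_factorial h1 h2)) hKd
  set E : Multiset ℕ := ∑ d ∈ Finset.range (N+1), Multiset.replicate (c J d - c I d) d with hE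
  have hEgraphic : IsGraphic E := by
    rw [hE]
    refine Finset.sum_induction _ IsGraphic (fun a b ha hb => isGraphic_add ha hb)
      isGraphic_zero ?_
    intro d hd
    rcases Nat.eq_zero_or_pos d with h0 | h1
    · subst h0; exact isGraphic_replicate_zero _
    · obtain ⟨t, ht⟩ := hdvd d h1 (by simpa using Nat.lt_succ_iff.mp (Finset.mem_range.mp hd))
      rw [ht]; exact isGraphic_replicate_mul d t
  have hcount : ∀ a, Multiset.count a E = if a ∈ Finset.range (N+1) then c J a - c I a else 0 := by
    intro a
    rw [hE, Multiset.count_sum']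
    rw [← Finset.sum_ite_eq (Finset.range (N+1)) a (fun d => c J d - c I d)]
    exact Finset.sum_congr rfl fun d _ => by rw [Multiset.count_replicate]; simp [eq_comm]
  have hDJ : D J = D I + E := by
    ext a
    rw [Multiset.count_add, hcount a]
    by_cases ha : a ≤ N
    · rw [if_pos (Finset.mem_range.mpr (by omega))]
      have := hle a ha
      show c J a = c I a + (c J a - c I a)
      omega
    · rw [if_neg (by simp; omega)]
      have h1 : Multiset.count a (D J) = 0 :=
        Multiset.count_eq_zero.2 fun h => ha (hbdd J a h)
      have h2 : Multiset.count a (D I) = 0 :=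
        Multiset.count_eq_zero.2 fun h => ha (hbdd I a h)
      show Multiset.count a (D J) = Multiset.count a (D I) + 0
      omega
  exact ⟨I, J, hIJ, by rw [hDJ]; exact raoLE_add (hgraphic I) hEgraphic⟩
end

section
/- Let D and D' be graphic sequences with regularity vectors V and V' (entries bounded by N), such that V ≤ V' componentwise and the regularity vector V' − V is itself graphic. Then D ≤ D', i.e., some realization of D is an induced subgraph of some realization of D'. -/
/-- The multiset encoded by a regularity vector `(a_N, …, a_1)`:
`V i` copies of the value `i + 1`, for `i = 0, …, N-1`. -/
def regMultiset (N : ℕ) (V : Fin N → ℕ) : Multiset ℕ :=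
  ∑ i : Fin N, Multiset.replicate (V i) ((i : ℕ) + 1)

lemma neighborSet_sum_inl {α β : Type} (G : SimpleGraph α) (K : SimpleGraph β) (a : α) :
    (G ⊕g K).neighborSet (Sum.inl a) = Sum.inl '' G.neighborSet a := by
  ext x
  cases x with
  | inl b => simp [SimpleGraph.neighborSet]
  | inr b => simp [SimpleGraph.neighborSet]

lemma neighborSet_sum_inr {α β : Type} (G : SimpleGraph α) (K : SimpleGraph β) (b : β) :
    (G ⊕g K).neighborSet (Sum.inr b) = Sum.inr '' K.neighborSet b := by
  ext x
  cases x with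
  | inl a => simp [SimpleGraph.neighborSet]
  | inr a => simp [SimpleGraph.neighborSet]

lemma degreeMultiset_sum {α β : Type} [Fintype α] [Fintype β]
    (G : SimpleGraph α) (K : SimpleGraph β) :
    degreeMultiset (G ⊕g K) = degreeMultiset G + degreeMultiset K := by
  unfold degreeMultiset
  have huniv : (Finset.univ : Finset (α ⊕ β)).val
      = (Finset.univ : Finset α).val.map Sum.inl
        + (Finset.univ : Finset β).val.map Sum.inr := by
    rw [← Finset.univ_disjSum_univ]
    rfl
  rw [huniv, Multiset.map_add, Multiset.map_map, Multiset.map_map]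
  congr 1
  · apply Multiset.map_congr rfl
    intro a _
    simp [Function.comp, neighborSet_sum_inl,
      Set.ncard_image_of_injective _ Sum.inl_injective]
  · apply Multiset.map_congr rfl
    intro b _
    simp [Function.comp, neighborSet_sum_inr,
      Set.ncard_image_of_injective _ Sum.inr_injective]

lemma degreeMultiset_comap_equiv {α β : Type} [Fintype α] [Fintype β]
    (e : β ≃ α) (S : SimpleGraph α) :
    degreeMultiset (S.comap e) = degreeMultiset S := by
  unfold degreeMultiset
  have huniv : (Finset.univ : Finset α).val
      = (Finset.univ : Finset β).val.map e := by
    rw [← Finset.map_univ_equiv e]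
    rfl
  rw [huniv, Multiset.map_map]
  apply Multiset.map_congr rfl
  intro b _
  have : (S.comap e).neighborSet b = e ⁻¹' S.neighborSet (e b) := rfl
  rw [this]
  have h2 : ⇑e ⁻¹' S.neighborSet (e b) = e.symm '' S.neighborSet (e b) := by
    ext x; simp [Equiv.eq_symm_apply, Set.mem_image, eq_comm]
  rw [h2]
  simp [Set.ncard_image_of_injective _ e.symm.injective]

lemma regMultiset_add (N : ℕ) (V W : Fin N → ℕ) :
    regMultiset N V + regMultiset N W = regMultiset N (fun i => V i + W i) := by
  unfold regMultiset
  rw [← Finset.sum_add_distrib]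
  apply Finset.sum_congr rfl
  intro i _
  rw [← Multiset.replicate_add]

/-- If `D` and `D'` are graphic with regularity vectors `V ≤ V'` componentwise,
and the vector `V' - V` is itself graphic, then `D ≤ D'` in the Rao order. -/
theorem stmt8 (N : ℕ) (V V' : Fin N → ℕ)
    (hV : IsGraphic (regMultiset N V))
    (hV' : IsGraphic (regMultiset N V'))
    (hle : ∀ i, V i ≤ V' i)
    (hdiff : IsGraphic (regMultiset N (fun i => V' i - V i))) :
    RaoLE (regMultiset N V) (regMultiset N V') := by
  obtain ⟨m, G, hG⟩ := hV
  obtain ⟨k, K, hK⟩ := hdiff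
  set e : Fin m ⊕ Fin k ≃ Fin (m + k) := finSumFinEquiv
  refine ⟨m, m + k, G, (G ⊕g K).comap e.symm,
    ⟨fun a => e (Sum.inl a), fun a b h => by simpa using e.injective h⟩, hG, ?_, ?_⟩
  · rw [degreeMultiset_comap_equiv e.symm, degreeMultiset_sum, hG, hK,
      regMultiset_add]
    congr 1
    funext i
    exact Nat.add_sub_cancel' (hle i)
  · intro u v
    show G.Adj u v ↔ (G ⊕g K).Adj (e.symm (e (Sum.inl u))) (e.symm (e (Sum.inl v)))
    rw [Equiv.symm_apply_apply, Equiv.symm_apply_apply]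
    exact Iff.rfl
end

section
/- Let N be a positive integer and suppose every graphic sequence with entries at most N can be realized by a graph each of whose connected components has at most 3N² vertices. Then the set of graphic sequences with entries at most N is well-quasi-ordered under the Rao order D ≤ D'. -/
open SimpleGraph

/-- Codes for small graphs: a number of vertices together with a graph on them. -/
abbrev CodeT := Σ k : ℕ, SimpleGraph (Fin k)

/-- The code of a connected component: its number of vertices together with a copy of the
induced subgraph on its support, transported to `Fin`. -/
noncomputable def compCode {n : ℕ} (G : SimpleGraph (Fin n)) (c : G.ConnectedComponent) :
    CodeT :=
  ⟨Nat.card c.supp, SimpleGraph.comap (Finite.equivFin c.supp).symm (G.induce c.supp)⟩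

lemma sigma_graph_eq {k k' : ℕ} {A : SimpleGraph (Fin k)} {B : SimpleGraph (Fin k')}
    (h : (⟨k, A⟩ : CodeT) = ⟨k', B⟩) :
    ∃ ε : Fin k ≃ Fin k', ∀ x y, A.Adj x y ↔ B.Adj (ε x) (ε y) := by
  obtain ⟨h1, h2⟩ := Sigma.mk.inj_iff.mp h
  subst h1
  exact ⟨Equiv.refl _, by rw [eq_of_heq h2]; intro x y; rfl⟩

lemma compCode_eq {n n' : ℕ} {G : SimpleGraph (Fin n)} {G' : SimpleGraph (Fin n')}
    {c : G.ConnectedComponent} {c' : G'.ConnectedComponent}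
    (h : compCode G c = compCode G' c') :
    ∃ φ : c.supp ≃ c'.supp, ∀ u v : c.supp, G.Adj u v ↔ G'.Adj (φ u) (φ v) := by
  obtain ⟨ε, hε⟩ := sigma_graph_eq h
  set e := Finite.equivFin c.supp
  set e' := Finite.equivFin c'.supp
  refine ⟨e.trans (ε.trans e'.symm), fun u v => ?_⟩
  have h1 := hε (e u) (e v)
  simpa only [comap_adj, Equiv.symm_apply_apply, Function.Embedding.coe_subtype, Equiv.trans_apply] using h1

lemma supp_card_le {n K : ℕ} (G : SimpleGraph (Fin n))
    (h : ∀ v : Fin n, {w : Fin n | G.Reachable v w}.ncard ≤ K)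
    (c : G.ConnectedComponent) : Nat.card c.supp ≤ K := by
  induction c using ConnectedComponent.ind with
  | _ v =>
    have hs : (G.connectedComponentMk v).supp = {w : Fin n | G.Reachable v w} := by
      ext w
      simp only [ConnectedComponent.mem_supp_iff, ConnectedComponent.eq, Set.mem_setOf_eq]
      exact ⟨Reachable.symm, Reachable.symm⟩
    rw [hs, Nat.card_coe_set_eq]
    exact h v

/-- If every graphic sequence with entries at most `N` has a realization whose
components all have at most `3N²` vertices, then the graphic sequences with
entries at most `N` are well-quasi-ordered under the Rao order. -/
theorem stmt12 (N : ℕ) (hN : 0 < N)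
    (hreal : ∀ D : Multiset ℕ, IsGraphic D → (∀ x ∈ D, x ≤ N) →
      ∃ (n : ℕ) (G : SimpleGraph (Fin n)), degreeMultiset G = D ∧
        ∀ v : Fin n, {w : Fin n | G.Reachable v w}.ncard ≤ 3 * N ^ 2) :
    ∀ D : ℕ → Multiset ℕ, (∀ i, IsGraphic (D i)) → (∀ i, ∀ x ∈ D i, x ≤ N) →
      ∃ i j, i < j ∧ RaoLE (D i) (D j) := by
  intro D hg hle
  set K := 3 * N ^ 2 with hK
  choose n G hdeg hcomp using fun i => hreal (D i) (hg i) (hle i)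
  -- enumerations of components
  let E : ∀ i, (G i).ConnectedComponent ≃ Fin (Nat.card (G i).ConnectedComponent) :=
    fun i => Finite.equivFin _
  let L : ℕ → List CodeT := fun i => List.ofFn (fun p => compCode (G i) ((E i).symm p))
  -- the finite set of small codes
  have hfin : ({x : CodeT | x.1 ≤ K}).Finite := by
    have : {x : CodeT | x.1 ≤ K} ⊆ ⋃ k ∈ Set.Iic K, (Sigma.mk k '' Set.univ) := by
      rintro ⟨k, A⟩ hk
      exact Set.mem_biUnion hk ⟨A, trivial, rfl⟩
    exact Set.Finite.subset
      ((Set.finite_Iic K).biUnion (fun k _ => Set.finite_univ.image _)) this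
  have hpwo := (hfin.partiallyWellOrderedOn (r := (· = ·))).partiallyWellOrderedOn_sublistForall₂
  have hmem : ∀ i, ∀ x ∈ L i, x ∈ {x : CodeT | x.1 ≤ K} := by
    intro i x hx
    obtain ⟨p, rfl⟩ := List.mem_ofFn.mp hx
    exact supp_card_le (G i) (hcomp i) _
  obtain ⟨i, j, hij, hsub⟩ := hpwo.exists_lt hmem
  refine ⟨i, j, hij, n i, n j, G i, G j, ?_⟩
  -- extract a sublist
  have hsub' : (L i).Sublist (L j) := by
    obtain ⟨l, h1, h2⟩ := List.sublistForall₂_iff.mp hsub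
    rw [List.forall₂_eq_eq_eq] at h1
    exact h1 ▸ h2
  obtain ⟨f, hget⟩ := List.sublist_iff_exists_fin_orderEmbedding_get_eq.mp hsub'
  have hleni : (L i).length = Nat.card (G i).ConnectedComponent := List.length_ofFn
  have hlenj : (L j).length = Nat.card (G j).ConnectedComponent := List.length_ofFn
  set pIdx : (G i).ConnectedComponent → Fin (L i).length :=
    fun c => Fin.cast hleni.symm (E i c) with hpIdx
  set d : (G i).ConnectedComponent → (G j).ConnectedComponent :=
    fun c => (E j).symm (Fin.cast hlenj (f (pIdx c))) with hd
  have hdinj : Function.Injective d := by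
    intro a b h
    apply (E i).injective
    apply Fin.cast_injective hleni.symm
    apply f.injective
    apply Fin.cast_injective hlenj
    exact (E j).symm.injective h
  have hcode : ∀ c, compCode (G i) c = compCode (G j) (d c) := by
    intro c
    have h := hget (pIdx c)
    simp only [L, List.get_ofFn] at h
    convert h using 3 <;> simp [d, pIdx, Fin.cast]
  choose φ hφadj using fun c => compCode_eq (hcode c)
  have hmemc : ∀ v : Fin (n i), v ∈ ((G i).connectedComponentMk v).supp :=
    fun v => (ConnectedComponent.mem_supp_iff _ _).mpr rfl
  set F : Fin (n i) → Fin (n j) :=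
    fun v => (φ ((G i).connectedComponentMk v) ⟨v, hmemc v⟩ : Fin (n j)) with hF
  have hFval : ∀ (c) (v : Fin (n i)) (hv : v ∈ c.supp), F v = ↑(φ c ⟨v, hv⟩) := by
    intro c v hv
    have h : (G i).connectedComponentMk v = c := (ConnectedComponent.mem_supp_iff _ _).mp hv
    subst h
    rfl
  have hFmem : ∀ v, F v ∈ (d ((G i).connectedComponentMk v)).supp := fun v =>
    (φ _ ⟨v, hmemc v⟩).2
  have hFinj : Function.Injective F := by
    intro u v h
    have hu := hFmem u
    have hv := hFmem v
    rw [h] at hu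
    have hcc' : (G i).connectedComponentMk v = (G i).connectedComponentMk u := hdinj (by
      rw [← (ConnectedComponent.mem_supp_iff _ _).mp hu,
        ← (ConnectedComponent.mem_supp_iff _ _).mp hv])
    have hu' : u ∈ ((G i).connectedComponentMk v).supp := by
      rw [ConnectedComponent.mem_supp_iff]
      exact hcc'.symm
    rw [hFval _ u hu', hFval _ v (hmemc v)] at h
    exact congrArg Subtype.val ((φ _).injective (Subtype.ext h))
  refine ⟨⟨F, hFinj⟩, hdeg i, hdeg j, fun u v => ?_⟩
  constructor
  · intro h
    have hcc : (G i).connectedComponentMk u = (G i).connectedComponentMk v :=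
      SimpleGraph.ConnectedComponent.connectedComponentMk_eq_of_adj h
    have hv' : v ∈ ((G i).connectedComponentMk u).supp := by
      rw [ConnectedComponent.mem_supp_iff]
      exact hcc.symm
    show (G j).Adj (F u) (F v)
    rw [hFval _ u (hmemc u), hFval _ v hv']
    exact (hφadj _ ⟨u, hmemc u⟩ ⟨v, hv'⟩).mp h
  · intro h
    have h' : (G j).Adj (F u) (F v) := h
    have hcc' : (G i).connectedComponentMk u = (G i).connectedComponentMk v := hdinj (by
      rw [← (ConnectedComponent.mem_supp_iff _ _).mp (hFmem u),
        ← (ConnectedComponent.mem_supp_iff _ _).mp (hFmem v)]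
      exact SimpleGraph.ConnectedComponent.connectedComponentMk_eq_of_adj h')
    have hv' : v ∈ ((G i).connectedComponentMk u).supp := by
      rw [ConnectedComponent.mem_supp_iff]
      exact hcc'.symm
    rw [hFval _ u (hmemc u), hFval _ v hv'] at h'
    exact (hφadj _ ⟨u, hmemc u⟩ ⟨v, hv'⟩).mpr h'
end

section
/- If D = (d_1, ..., d_n) is a nonincreasing sequence of positive integers with even sum, and for every k in {1, ..., n} the inequality Σ_{i=1}^{k} d_i ≤ k(k−1) + Σ_{i=k+1}^{n} min(d_i, k) holds, then D is graphic (Erdős–Gallai, sufficiency direction). -/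
set_option linter.unusedSectionVars false

open Finset
noncomputable def ndeg {V : Type} [Fintype V] (G : SimpleGraph V) (v : V) : ℕ :=
  (G.neighborSet v).ncard

section Graph
variable {V : Type} [Fintype V] [DecidableEq V] {G : SimpleGraph V}

lemma neighborSet_sup (G H : SimpleGraph V) (v : V) :
    (G ⊔ H).neighborSet v = G.neighborSet v ∪ H.neighborSet v := by
  ext w; simp [SimpleGraph.mem_neighborSet, SimpleGraph.sup_adj]

lemma edge_nbr_left {a b : V} (hab : a ≠ b) :
    (SimpleGraph.edge a b).neighborSet a = {b} := by
  ext w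
  simp only [SimpleGraph.mem_neighborSet, SimpleGraph.edge_adj, Set.mem_singleton_iff]
  constructor
  · rintro ⟨(⟨-, rfl⟩ | ⟨h3, rfl⟩), h⟩
    · rfl
    · exact absurd h3 hab
  · rintro rfl; exact ⟨Or.inl ⟨trivial, rfl⟩, hab⟩

lemma edge_nbr_other {a b w : V} (hwa : w ≠ a) (hwb : w ≠ b) :
    (SimpleGraph.edge a b).neighborSet w = ∅ := by
  ext z; simp [SimpleGraph.mem_neighborSet, SimpleGraph.edge_adj]
  tauto

lemma ndeg_sup_edge_left {a b : V} (hab : a ≠ b) (h : ¬ G.Adj a b) :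
    ndeg (G ⊔ SimpleGraph.edge a b) a = ndeg G a + 1 := by
  unfold ndeg
  rw [neighborSet_sup, edge_nbr_left hab, Set.union_singleton,
    Set.ncard_insert_of_notMem (by simpa using h)]

lemma edge_comm' (a b : V) : SimpleGraph.edge a b = SimpleGraph.edge b a := by
  ext x y; rw [SimpleGraph.edge_adj, SimpleGraph.edge_adj]; tauto

lemma ndeg_sup_edge_right {a b : V} (hab : a ≠ b) (h : ¬ G.Adj a b) :
    ndeg (G ⊔ SimpleGraph.edge a b) b = ndeg G b + 1 := by
  rw [edge_comm']
  exact ndeg_sup_edge_left hab.symm (fun hc => h hc.symm)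

lemma ndeg_sup_edge_other {a b w : V} (hwa : w ≠ a) (hwb : w ≠ b) :
    ndeg (G ⊔ SimpleGraph.edge a b) w = ndeg G w := by
  unfold ndeg
  rw [neighborSet_sup, edge_nbr_other hwa hwb, Set.union_empty]

lemma edge_le (h : G.Adj a b) : SimpleGraph.edge a b ≤ G := by
  intro x y hxy
  rw [SimpleGraph.edge_adj] at hxy
  rcases hxy with ⟨(⟨rfl, rfl⟩ | ⟨rfl, rfl⟩), _⟩
  · exact h
  · exact h.symm

lemma sdiff_edge_not_adj {a b : V} : ¬ (G \ SimpleGraph.edge a b).Adj a b := by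
  rw [SimpleGraph.sdiff_adj]
  rintro ⟨h1, h2⟩
  exact h2 (by rw [SimpleGraph.edge_adj]; exact ⟨Or.inl ⟨rfl, rfl⟩, h1.ne⟩)

lemma sdiff_sup_edge (h : G.Adj a b) :
    (G \ SimpleGraph.edge a b) ⊔ SimpleGraph.edge a b = G :=
  sdiff_sup_cancel (edge_le h)

lemma ndeg_del_left {a b : V} (h : G.Adj a b) :
    ndeg G a = ndeg (G \ SimpleGraph.edge a b) a + 1 := by
  conv_lhs => rw [← sdiff_sup_edge h]
  exact ndeg_sup_edge_left h.ne sdiff_edge_not_adj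

lemma ndeg_del_right {a b : V} (h : G.Adj a b) :
    ndeg G b = ndeg (G \ SimpleGraph.edge a b) b + 1 := by
  conv_lhs => rw [← sdiff_sup_edge h]
  exact ndeg_sup_edge_right h.ne sdiff_edge_not_adj

lemma ndeg_del_other {a b w : V} (h : G.Adj a b) (hwa : w ≠ a) (hwb : w ≠ b) :
    ndeg (G \ SimpleGraph.edge a b) w = ndeg G w := by
  conv_rhs => rw [← sdiff_sup_edge h]
  exact (ndeg_sup_edge_other hwa hwb).symm

lemma bump (G : SimpleGraph V) (u v : V) (huv : u ≠ v)
    (hcard : ndeg G u + 2 ≤ Fintype.card V)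
    (hmin : ∀ x, x ≠ u → x ≠ v → ndeg G v < ndeg G x) :
    ∃ G' : SimpleGraph V, ndeg G' u = ndeg G u + 1 ∧ ndeg G' v = ndeg G v + 1 ∧
      ∀ w, w ≠ u → w ≠ v → ndeg G' w = ndeg G w := by
  by_cases hAdj : G.Adj u v
  · -- swap case
    obtain ⟨x, hx⟩ : ∃ x, x ∉ insert u (G.neighborSet u) := by
      by_contra hc
      push_neg at hc
      have he : insert u (G.neighborSet u) = Set.univ := Set.eq_univ_of_forall hc
      have h1 : (insert u (G.neighborSet u)).ncard ≤ ndeg G u + 1 :=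
        Set.ncard_insert_le _ _
      rw [he, Set.ncard_univ, Nat.card_eq_fintype_card] at h1
      omega
    have hxu : x ≠ u := fun h => hx (h ▸ Set.mem_insert _ _)
    have hxNu : ¬ G.Adj u x := fun h => hx (Set.mem_insert_of_mem _ h)
    have hxv : x ≠ v := fun h => hx (Set.mem_insert_of_mem _ (h ▸ hAdj))
    have hdx : ndeg G v < ndeg G x := hmin x hxu hxv
    have hny : ¬ (G.neighborSet x ⊆ insert v (G.neighborSet v)) := by
      intro hsub
      by_cases hxv' : G.Adj x v
      · have hxmem : x ∈ G.neighborSet v := hxv'.symm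
        have hsub2 : G.neighborSet x ⊆ insert v ((G.neighborSet v) \ {x}) := by
          intro z hz
          rcases hsub hz with h' | h'
          · exact Or.inl h'
          · exact Or.inr ⟨h', fun hzx => (G.irrefl (hzx ▸ hz))⟩
        have h2 : ndeg G x ≤ (G.neighborSet v \ {x}).ncard + 1 :=
          le_trans (Set.ncard_le_ncard hsub2 (Set.toFinite _)) (Set.ncard_insert_le _ _)
        rw [Set.ncard_diff_singleton_of_mem hxmem] at h2
        have h3 : 0 < ndeg G v := (Set.ncard_pos (Set.toFinite _)).mpr ⟨x, hxmem⟩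
        have h4 : (G.neighborSet v).ncard = ndeg G v := rfl
        omega
      · have hsub2 : G.neighborSet x ⊆ G.neighborSet v := by
          intro z hz
          rcases hsub hz with h' | h'
          · exact absurd (h' ▸ hz) hxv'
          · exact h'
        have h2 : ndeg G x ≤ ndeg G v := Set.ncard_le_ncard hsub2 (Set.toFinite _)
        omega
    obtain ⟨y, hyNx, hyIns⟩ := Set.not_subset.mp hny
    have hyv : y ≠ v := fun h => hyIns (h ▸ Set.mem_insert _ _)
    have hyNv : ¬ G.Adj v y := fun h => hyIns (Set.mem_insert_of_mem _ h)
    have hyx : y ≠ x := fun h => G.irrefl (h ▸ hyNx)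
    have hyu : y ≠ u := fun h => hxNu ((h ▸ hyNx) : G.Adj x u).symm
    have hAdjxy : G.Adj x y := hyNx
    set G1 := G \ SimpleGraph.edge x y with hG1
    set G2 := G1 ⊔ SimpleGraph.edge u x with hG2
    set G' := G2 ⊔ SimpleGraph.edge v y with hG'
    have hG1u : ndeg G1 u = ndeg G u := ndeg_del_other hAdjxy hxu.symm hyu.symm
    have hG1v : ndeg G1 v = ndeg G v := ndeg_del_other hAdjxy hxv.symm hyv.symm
    have hG1x : ndeg G x = ndeg G1 x + 1 := ndeg_del_left hAdjxy
    have hG1y : ndeg G y = ndeg G1 y + 1 := ndeg_del_right hAdjxy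
    have hnadj1 : ¬ G1.Adj u x := by
      rw [hG1, SimpleGraph.sdiff_adj]; tauto
    have hG2u : ndeg G2 u = ndeg G1 u + 1 := ndeg_sup_edge_left hxu.symm hnadj1
    have hG2x : ndeg G2 x = ndeg G1 x + 1 := ndeg_sup_edge_right hxu.symm hnadj1
    have hG2v : ndeg G2 v = ndeg G1 v := ndeg_sup_edge_other huv.symm hxv.symm
    have hG2y : ndeg G2 y = ndeg G1 y := ndeg_sup_edge_other hyu hyx
    have hnadj2 : ¬ G2.Adj v y := by
      simp only [hG2, hG1, SimpleGraph.sup_adj, SimpleGraph.sdiff_adj, SimpleGraph.edge_adj]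
      rintro (⟨h1, -⟩ | ⟨(⟨h1, h2⟩ | ⟨h1, h2⟩), -⟩)
      · exact hyNv h1
      · exact huv.symm h1
      · exact hxv.symm h1
    have hGpv : ndeg G' v = ndeg G2 v + 1 := ndeg_sup_edge_left hyv.symm hnadj2
    have hGpy : ndeg G' y = ndeg G2 y + 1 := ndeg_sup_edge_right hyv.symm hnadj2
    have hGpu : ndeg G' u = ndeg G2 u := ndeg_sup_edge_other huv hyu.symm
    have hGpx : ndeg G' x = ndeg G2 x := ndeg_sup_edge_other hxv hyx.symm
    refine ⟨G', by omega, by omega, fun w hwu hwv => ?_⟩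
    by_cases hwx : w = x
    · subst hwx; omega
    by_cases hwy : w = y
    · subst hwy; omega
    have e1 : ndeg G' w = ndeg G2 w := ndeg_sup_edge_other hwv hwy
    have e2 : ndeg G2 w = ndeg G1 w := ndeg_sup_edge_other hwu hwx
    have e3 : ndeg G1 w = ndeg G w := ndeg_del_other hAdjxy hwx hwy
    omega
  · refine ⟨G ⊔ SimpleGraph.edge u v, ndeg_sup_edge_left huv hAdj,
      ndeg_sup_edge_right huv hAdj, fun w hwu hwv => ndeg_sup_edge_other hwu hwv⟩

lemma extend (m : ℕ) (G' : SimpleGraph (Fin m)) :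
    ∃ G : SimpleGraph (Fin (m+1)),
      (∀ (v : Fin (m+1)) (hv : v.val < m), ndeg G v = ndeg G' ⟨v.val, hv⟩) ∧
      (∀ v : Fin (m+1), v.val = m → ndeg G v = 0) := by
  let f : Fin m ↪ Fin (m+1) := ⟨Fin.castSucc, Fin.castSucc_injective m⟩
  refine ⟨G'.map f, ?_, ?_⟩
  · intro v hv
    have hv' : v = f ⟨v.val, hv⟩ := by apply Fin.ext; rfl
    unfold ndeg
    conv_lhs => rw [hv']
    have himg : (G'.map f).neighborSet (f ⟨v.val, hv⟩) = f '' (G'.neighborSet ⟨v.val, hv⟩) := by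
      ext w
      simp only [SimpleGraph.mem_neighborSet, SimpleGraph.map_adj, Set.mem_image]
      constructor
      · rintro ⟨a, b, hab, ha, rfl⟩
        have haa : a = ⟨v.val, hv⟩ := f.injective ha
        subst haa
        exact ⟨b, hab, rfl⟩
      · rintro ⟨b, hb, rfl⟩
        exact ⟨_, b, hb, rfl, rfl⟩
    rw [himg, Set.ncard_image_of_injective _ f.injective]
  · intro v hv
    unfold ndeg
    convert Set.ncard_empty (Fin (m+1))
    rw [Set.eq_empty_iff_forall_notMem]
    intro w hw
    rw [SimpleGraph.mem_neighborSet, SimpleGraph.map_adj] at hw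
    obtain ⟨a, b, _, ha, _⟩ := hw
    have : (f a).val = a.val := rfl
    rw [ha] at this
    rw [hv] at this
    omega

end Graph

lemma filter_eq_sum_boole (s : Finset ℕ) (p : ℕ → Prop) [DecidablePred p] :
    ∑ i ∈ s, (if p i then (1:ℕ) else 0) = #(s.filter p) := by simp [Finset.sum_boole]

lemma slack_lemma (n : ℕ) (d : ℕ → ℕ)
    (hmono : ∀ i j, i ≤ j → j < n → d j ≤ d i)
    (hpos : ∀ i, i < n → 1 ≤ d i)
    (heven : Even (∑ i ∈ range n, d i))
    (hEG : ∀ k, 1 ≤ k → k ≤ n →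
      ∑ i ∈ range k, d i ≤ k * (k - 1) + ∑ i ∈ Ico k n, min (d i) k)
    (k : ℕ) (hk1 : 1 ≤ k) (hku : k + 2 ≤ n) (hdk : d k = d 0) :
    ∑ i ∈ range k, d i + ((if d 0 ≤ k then 1 else 0) + (if d (n-1) ≤ k then 1 else 0))
      ≤ k * (k - 1) + ∑ i ∈ Ico k n, min (d i) k := by
  obtain ⟨j, rfl⟩ : ∃ j, k = j + 1 := ⟨k - 1, by omega⟩
  simp only [Nat.add_sub_cancel]
  have hdM : ∀ i, i ≤ j + 1 → d i = d 0 := by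
    intro i hi
    have h1 : d i ≤ d 0 := hmono 0 i (Nat.zero_le _) (by omega)
    have h2 : d (j+1) ≤ d i := hmono i (j+1) hi (by omega)
    omega
  have hPk : ∑ i ∈ range (j+1), d i = (j+1) * d 0 := by
    rw [Finset.sum_congr rfl (fun i hi => hdM i (le_of_lt (mem_range.mp hi)))]
    rw [Finset.sum_const, card_range, smul_eq_mul]
  have hδpos : 1 ≤ d (n-1) := hpos _ (by omega)
  have hδle : d (n-1) ≤ d 0 := hmono 0 (n-1) (Nat.zero_le _) (by omega)
  have hEGk : ∑ i ∈ range (j+1), d i ≤ (j+1) * j + ∑ i ∈ Ico (j+1) n, min (d i) (j+1) := by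
    have h := hEG (j+1) (by omega) (by omega)
    simpa using h
  by_cases hM : d 0 ≤ j + 1
  · -- small max case: need slack ≥ 2 via parity
    have hmineq : ∀ i ∈ Ico (j+1) n, min (d i) (j+1) = d i := by
      intro i hi
      rw [mem_Ico] at hi
      have := hmono 0 i (Nat.zero_le _) hi.2
      omega
    rw [Finset.sum_congr rfl hmineq]
    rw [Finset.sum_congr rfl hmineq] at hEGk
    rw [hPk] at hEGk ⊢
    set R := ∑ i ∈ Ico (j+1) n, d i with hR
    have hpair : d (j+1) + d (n-1) ≤ R := by
      have hsub : ({j+1, n-1} : Finset ℕ) ⊆ Ico (j+1) n := by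
        intro i hi
        simp only [Finset.mem_insert, Finset.mem_singleton] at hi
        rcases hi with rfl | rfl <;> (rw [mem_Ico]; omega)
      calc d (j+1) + d (n-1) = ∑ i ∈ ({j+1, n-1} : Finset ℕ), d i :=
            (Finset.sum_pair (by omega : j+1 ≠ n-1)).symm
        _ ≤ R := Finset.sum_le_sum_of_subset hsub
    have hsplit : ∑ i ∈ range (j+1), d i + R = ∑ i ∈ range n, d i :=
      Finset.sum_range_add_sum_Ico d (by omega)
    have hid1 : (j+1) * d 0 = j * d 0 + d 0 := by ring
    have hcomm : j * (j+1) = (j+1) * j := Nat.mul_comm _ _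
    have hm1 : j * d 0 ≤ j * (j+1) := Nat.mul_le_mul_left j hM
    have hne0 : (j+1) * d 0 ≠ (j+1) * j + R := by omega
    have hne1 : (j+1) * d 0 + 1 ≠ (j+1) * j + R := by
      intro h1
      obtain ⟨c, hc⟩ := heven
      rw [← hsplit, hPk] at hc
      obtain ⟨e, he⟩ := Nat.even_mul_succ_self j
      omega
    rw [if_pos hM, if_pos (le_trans hδle hM)]
    omega
  · -- big max case
    rw [if_neg hM]
    by_cases hδ : d (n-1) ≤ j + 1
    swap
    · rw [if_neg hδ]
      omega
    rw [if_pos hδ]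
    by_contra hcon
    push_neg at hcon
    have heq : ∑ i ∈ range (j+1), d i = (j+1) * j + ∑ i ∈ Ico (j+1) n, min (d i) (j+1) := by
      omega
    set S := Ico (j+2) n with hS
    set A := #(S.filter (fun i => j+2 ≤ d i)) with hA
    set X := #(S.filter (fun i => j+1 ≤ d i)) with hX
    set s := ∑ i ∈ S.filter (fun i => ¬ (j+1 ≤ d i)), d i with hs
    have hbot : ∑ i ∈ Ico (j+1) n, min (d i) (j+1)
        = min (d (j+1)) (j+1) + ∑ i ∈ S, min (d i) (j+1) :=
      Finset.sum_eq_sum_Ico_succ_bot (by omega) _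
    have hminkk : min (d (j+1)) (j+1) = j+1 := by omega
    have hsplitS : ∑ i ∈ S, min (d i) (j+1) = (j+1) * X + s := by
      rw [← Finset.sum_filter_add_sum_filter_not S (fun i => j+1 ≤ d i)]
      congr 1
      · rw [Finset.sum_congr rfl (fun i hi => ?_), Finset.sum_const, smul_eq_mul, mul_comm]
        have := (Finset.mem_filter.mp hi).2
        omega
      · exact Finset.sum_congr rfl (fun i hi => by
          have := (Finset.mem_filter.mp hi).2
          omega)
    have hI2 : ∑ i ∈ S, min (d i) (j+2) = ((j+1) * X + s) + A := by
      have hpt : ∀ i ∈ S, min (d i) (j+2) = min (d i) (j+1) + (if j+2 ≤ d i then 1 else 0) := by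
        intro i _
        by_cases h : j + 2 ≤ d i <;> simp [h] <;> omega
      rw [Finset.sum_congr rfl hpt, Finset.sum_add_distrib, hsplitS,
        filter_eq_sum_boole S (fun i => j+2 ≤ d i)]
    have hEGk1 : (j+1) * d 0 + d 0 ≤ (j+2) * (j+1) + (((j+1) * X + s) + A) := by
      have h := hEG (j+2) (by omega) (by omega)
      rw [Finset.sum_range_succ, hPk, hdk] at h
      have e1 : j + 2 - 1 = j + 1 := rfl
      rw [e1] at h
      rw [← hS] at h
      rw [hI2] at h
      exact h
    have heqk : (j+1) * d 0 = (j+1) * (j+1) + ((j+1) * X + s) := by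
      rw [hPk] at heq
      rw [hbot, hminkk, hsplitS] at heq
      have hid : (j+1) * j + (j + 1) = (j+1) * (j+1) := by ring
      omega
    have hd0 : d 0 ≤ (j+1) + A := by
      have hid : (j+2) * (j+1) = (j+1) * (j+1) + (j+1) := by ring
      omega
    have hAX : A ≤ X := by
      apply Finset.card_le_card
      intro a ha
      simp only [Finset.mem_filter] at *
      exact ⟨ha.1, by omega⟩
    have hmul1 : (j+1) * d 0 ≤ (j+1) * ((j+1) + A) := Nat.mul_le_mul_left _ hd0
    have hmul2 : (j+1) * A ≤ (j+1) * X := Nat.mul_le_mul_left _ hAX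
    have hidA : (j+1) * ((j+1) + A) = (j+1) * (j+1) + (j+1) * A := by ring
    have hs0 : s = 0 := by omega
    have hXA : X = A := by
      have h1 : (j+1) * X ≤ (j+1) * A := by omega
      have h2 : X ≤ A := Nat.le_of_mul_le_mul_left h1 (by omega)
      omega
    have hmemS : n - 1 ∈ S := by rw [hS, mem_Ico]; omega
    have hδk : d (n-1) = j + 1 := by
      rcases Nat.lt_or_ge (d (n-1)) (j+1) with hlt | hge
      · exfalso
        have hmem2 : n - 1 ∈ S.filter (fun i => ¬ (j+1 ≤ d i)) :=
          Finset.mem_filter.mpr ⟨hmemS, by omega⟩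
        have : d (n-1) ≤ s := Finset.single_le_sum (fun i _ => Nat.zero_le _) hmem2
        omega
      · omega
    have hsubA : S.filter (fun i => j+2 ≤ d i) ⊆ (S.filter (fun i => j+1 ≤ d i)).erase (n-1) := by
      intro i hi
      simp only [Finset.mem_filter] at hi
      rw [Finset.mem_erase]
      refine ⟨fun hieq => ?_, Finset.mem_filter.mpr ⟨hi.1, by omega⟩⟩
      rw [hieq] at hi
      omega
    have hXmem : n - 1 ∈ S.filter (fun i => j+1 ≤ d i) :=
      Finset.mem_filter.mpr ⟨hmemS, by omega⟩
    have hcard : A ≤ X - 1 := by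
      have h1 := Finset.card_le_card hsubA
      rw [Finset.card_erase_of_mem hXmem] at h1
      exact h1
    have hX1 : 1 ≤ X := Finset.card_pos.mpr ⟨n-1, hXmem⟩
    omega

lemma realize (fuel : ℕ) : ∀ (n : ℕ) (d : ℕ → ℕ),
    2 * (∑ i ∈ range n, d i) + n ≤ fuel →
    (∀ i j, i ≤ j → j < n → d j ≤ d i) →
    Even (∑ i ∈ range n, d i) →
    (∀ k, 1 ≤ k → k ≤ n →
      ∑ i ∈ range k, d i ≤ k * (k - 1) + ∑ i ∈ Ico k n, min (d i) k) →
    ∃ G : SimpleGraph (Fin n), ∀ v : Fin n, ndeg G v = d v.val := by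
  induction fuel with
  | zero =>
    intro n d hfuel _ _ _
    have hn : n = 0 := by omega
    subst hn
    exact ⟨⊥, fun v => v.elim0⟩
  | succ f ih =>
    intro n d hfuel hmono heven hEG
    rcases Nat.eq_zero_or_pos n with rfl | hn0
    · exact ⟨⊥, fun v => v.elim0⟩
    obtain ⟨m, rfl⟩ : ∃ m, n = m + 1 := ⟨n - 1, by omega⟩
    by_cases hz : d m = 0
    · -- strip the last (zero) entry
      have hsum : ∑ i ∈ range (m+1), d i = ∑ i ∈ range m, d i := by
        rw [Finset.sum_range_succ, hz, add_zero]
      have hEG' : ∀ k, 1 ≤ k → k ≤ m →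
          ∑ i ∈ range k, d i ≤ k * (k - 1) + ∑ i ∈ Ico k m, min (d i) k := by
        intro k hk1 hkm
        have h := hEG k hk1 (by omega)
        have hsplit : ∑ i ∈ Ico k (m+1), min (d i) k
            = ∑ i ∈ Ico k m, min (d i) k + min (d m) k := Finset.sum_Ico_succ_top (by omega) _
        rw [hsplit, hz] at h
        rw [Nat.zero_min, add_zero] at h
        exact h
      obtain ⟨G', hdeg⟩ := ih m d (by omega) (fun i j hij hj => hmono i j hij (by omega))
        (by rwa [hsum] at heven) hEG'
      obtain ⟨G, h1, h2⟩ := extend m G'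
      refine ⟨G, fun v => ?_⟩
      rcases Nat.lt_or_ge v.val m with hv | hv
      · rw [h1 v hv, hdeg]
      · have hvm : v.val = m := by omega
        rw [h2 v hvm, hvm, hz]
    · -- all entries positive
      have hpos : ∀ i, i < m+1 → 1 ≤ d i := by
        intro i hi
        have := hmono i m (by omega) (by omega)
        omega
      rcases Nat.eq_zero_or_pos m with rfl | hm1
      · exfalso
        have h := hEG 1 le_rfl (by omega)
        rw [Finset.sum_range_one] at h
        rw [show Ico 1 (0+1) = (∅ : Finset ℕ) from rfl] at h
        simp at h
        exact hz h
      -- now m ≥ 1, all of d 0 .. d m ≥ 1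
      set M := d 0 with hMdef
      set cnt := #((range (m+1)).filter (fun i => d i = M)) with hcnt
      have hcnt1 : 1 ≤ cnt := by
        apply Finset.card_pos.mpr
        exact ⟨0, Finset.mem_filter.mpr ⟨Finset.mem_range.mpr (by omega), rfl⟩⟩
      have hdEq : ∀ i, i < cnt → d i = M := by
        intro i hi
        by_contra hne
        have hicnt : i < m + 1 := by
          have := Finset.card_filter_le (range (m+1)) (fun i => d i = M)
          rw [Finset.card_range] at this
          omega
        have hsub : (range (m+1)).filter (fun i => d i = M) ⊆ range i := by
          intro a ha
          rw [Finset.mem_filter, Finset.mem_range] at ha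
          rw [Finset.mem_range]
          by_contra hai
          have h1 : d a ≤ d i := hmono i a (by omega) ha.1
          have h2 : d i ≤ M := hmono 0 i (Nat.zero_le _) hicnt
          omega
        have := Finset.card_le_card hsub
        rw [Finset.card_range] at this
        omega
      have hdLt : ∀ i, i < m + 1 → d i = M → i < cnt := by
        intro i hi hdi
        have hsub : range (i+1) ⊆ (range (m+1)).filter (fun i => d i = M) := by
          intro a ha
          rw [Finset.mem_range] at ha
          refine Finset.mem_filter.mpr ⟨Finset.mem_range.mpr (by omega), ?_⟩
          have h1 : d a ≤ M := hmono 0 a (Nat.zero_le _) (by omega)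
          have h2 : d i ≤ d a := hmono a i (by omega) hi
          omega
        have := Finset.card_le_card hsub
        rw [Finset.card_range] at this
        omega
      set u := min (cnt - 1) (m - 1) with hu
      have humle : u ≤ m - 1 := min_le_right _ _
      have hule : u ≤ cnt - 1 := min_le_left _ _
      have hdownM : ∀ i, i ≤ u → d i = M := fun i hi => hdEq i (by omega)
      have huM : d u = M := hdownM u le_rfl
      have hafter : ∀ j, u < j → j < m → d j < M := by
        intro j h1 h2
        by_cases hcase : cnt - 1 ≤ m - 1
        · have hu' : u = cnt - 1 := by rw [hu]; omega
          have hle : d j ≤ M := hmono 0 j (Nat.zero_le _) (by omega)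
          rcases Nat.lt_or_ge (d j) M with h | h
          · exact h
          · exfalso
            have : d j = M := by omega
            have := hdLt j (by omega) this
            omega
        · have hu' : u = m - 1 := by rw [hu]; omega
          omega
      have hMm : M ≤ m := by
        have h := hEG 1 le_rfl (by omega)
        have hb : ∑ i ∈ Ico 1 (m+1), min (d i) 1 ≤ ∑ i ∈ Ico 1 (m+1), 1 :=
          Finset.sum_le_sum (fun i _ => min_le_right _ _)
        rw [Finset.sum_const, Nat.card_Ico, smul_eq_mul, mul_one] at hb
        rw [Finset.sum_range_one] at h
        simp at h
        omega
      set d2 : ℕ → ℕ := fun i => if i = u ∨ i = m then d i - 1 else d i with hd2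
      have hum' : u ≠ m := by omega
      have hd2u : d2 u = M - 1 := by rw [hd2]; simp [huM]
      have hd2m : d2 m = d m - 1 := by rw [hd2]; simp
      have hd2o : ∀ i, i ≠ u → i ≠ m → d2 i = d i := by
        intro i h1 h2; rw [hd2]; simp [h1, h2]
      -- sum decomposition
      have hkey : ∀ K, K ≤ m+1 → ∑ i ∈ range K, d i
          = ∑ i ∈ range K, d2 i + ((if u < K then 1 else 0) + (if m < K then 1 else 0)) := by
        intro K hK
        have hpt : ∀ i ∈ range K, d i
            = d2 i + ((if i = u then 1 else 0) + (if i = m then 1 else 0)) := by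
          intro i hi
          rw [Finset.mem_range] at hi
          by_cases h1 : i = u
          · have h3 := hpos u (by omega)
            rw [h1, hd2u, huM, if_pos rfl, if_neg hum']
            rw [huM] at h3
            omega
          · by_cases h2 : i = m
            · have h3 := hpos m (by omega)
              rw [h2, hd2m, if_neg (Ne.symm hum'), if_pos rfl]
              omega
            · rw [hd2o i h1 h2, if_neg h1, if_neg h2]
              omega
        rw [Finset.sum_congr rfl hpt, Finset.sum_add_distrib, Finset.sum_add_distrib]
        congr 1
        congr 1
        · rw [Finset.sum_ite_eq' (range K) u (fun _ => 1)]
          simp [Finset.mem_range]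
        · rw [Finset.sum_ite_eq' (range K) m (fun _ => 1)]
          simp [Finset.mem_range]
      -- min-sum comparison
      have hkey2 : ∀ K, ∑ i ∈ Ico K (m+1), min (d i) K
          ≤ ∑ i ∈ Ico K (m+1), min (d2 i) K
            + ((if u ∈ Ico K (m+1) then (if d 0 ≤ K then 1 else 0) else 0)
              + (if m ∈ Ico K (m+1) then (if d m ≤ K then 1 else 0) else 0)) := by
        intro K
        have hpt : ∀ i ∈ Ico K (m+1), min (d i) K
            ≤ min (d2 i) K + ((if i = u then (if d 0 ≤ K then 1 else 0) else 0)
              + (if i = m then (if d m ≤ K then 1 else 0) else 0)) := by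
          intro i _
          by_cases h1 : i = u
          · have h3 := hpos 0 (by omega)
            rw [h1, hd2u, huM, ← hMdef, if_pos rfl, if_neg hum']
            split_ifs <;> omega
          · by_cases h2 : i = m
            · rw [h2, hd2m, if_neg (Ne.symm hum'), if_pos rfl]
              split_ifs <;> omega
            · rw [hd2o i h1 h2, if_neg h1, if_neg h2]
              omega
        calc ∑ i ∈ Ico K (m+1), min (d i) K
            ≤ ∑ i ∈ Ico K (m+1), (min (d2 i) K + ((if i = u then (if d 0 ≤ K then 1 else 0) else 0)
              + (if i = m then (if d m ≤ K then 1 else 0) else 0))) := Finset.sum_le_sum hpt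
          _ = _ := by
              rw [Finset.sum_add_distrib, Finset.sum_add_distrib,
                Finset.sum_ite_eq' (Ico K (m+1)) u (fun _ => if d 0 ≤ K then 1 else 0),
                Finset.sum_ite_eq' (Ico K (m+1)) m (fun _ => if d m ≤ K then 1 else 0)]
      -- EG for d2
      have hEG2 : ∀ k, 1 ≤ k → k ≤ m+1 →
          ∑ i ∈ range k, d2 i ≤ k * (k - 1) + ∑ i ∈ Ico k (m+1), min (d2 i) k := by
        intro k hk1 hkn
        rcases Nat.lt_or_ge k (m+1) with hkm | hkm
        swap
        · -- k = m+1
          have hkeq : k = m + 1 := by omega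
          subst hkeq
          have h := hEG (m+1) (by omega) le_rfl
          have h2 := hkey (m+1) le_rfl
          rw [if_pos (by omega : u < m+1), if_pos (by omega : m < m+1)] at h2
          have he : Ico (m+1) (m+1) = (∅ : Finset ℕ) := by simp
          rw [he] at h ⊢
          simp at h ⊢
          omega
        rcases Nat.lt_or_ge u k with huk | huk
        · -- u < k ≤ m
          have h := hEG k (by omega) (by omega)
          have h2 := hkey k (by omega)
          rw [if_pos huk, if_neg (by omega : ¬ m < k)] at h2
          have h3 := hkey2 k
          have hmmem : m ∈ Ico k (m+1) := Finset.mem_Ico.mpr ⟨by omega, by omega⟩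
          rw [if_pos hmmem] at h3
          have : (if d m ≤ k then 1 else 0) ≤ 1 := by split_ifs <;> omega
          by_cases humem : u ∈ Ico k (m+1)
          · rw [Finset.mem_Ico] at humem; omega
          · rw [if_neg humem] at h3
            omega
        · -- k ≤ u : use slack_lemma
          have hsl := slack_lemma (m+1) d hmono hpos heven hEG k hk1 (by omega)
            (by rw [← hMdef]; exact hdownM k huk)
          have h2 := hkey k (by omega)
          rw [if_neg (by omega : ¬ u < k), if_neg (by omega : ¬ m < k)] at h2
          have h3 := hkey2 k
          rw [if_pos (Finset.mem_Ico.mpr ⟨by omega, by omega⟩ : u ∈ Ico k (m+1)),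
            if_pos (Finset.mem_Ico.mpr ⟨by omega, by omega⟩ : m ∈ Ico k (m+1))] at h3
          have hnm1 : m + 1 - 1 = m := by omega
          rw [hnm1] at hsl
          omega
      -- monotonicity for d2
      have hmono2 : ∀ a b, a ≤ b → b < m+1 → d2 b ≤ d2 a := by
        intro a b hab hb
        by_cases hbu : b = u
        · rw [hbu, hd2u]
          by_cases hau : a = u
          · rw [hau, hd2u]
          · rw [hd2o a hau (by omega)]
            have h4 : d a = M := hdownM a (by omega)
            omega
        · by_cases hbm : b = m
          · rw [hbm, hd2m]
            by_cases hau : a = u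
            · rw [hau, hd2u]
              have h5 := hmono u m (by omega) (by omega)
              rw [huM] at h5
              omega
            · by_cases ham : a = m
              · rw [ham, hd2m]
              · rw [hd2o a hau ham]
                have h5 := hmono a m (by omega) (by omega)
                omega
          · rw [hd2o b hbu hbm]
            by_cases hau : a = u
            · rw [hau, hd2u]
              rw [hau] at hab
              have hub : u < b := by omega
              have h5 := hafter b hub (by omega)
              omega
            · by_cases ham : a = m
              · exfalso; apply hbm; omega
              · rw [hd2o a hau ham]
                exact hmono a b hab hb
      -- even sum for d2
      have hsum2 : ∑ i ∈ range (m+1), d i = ∑ i ∈ range (m+1), d2 i + 2 := by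
        have h2 := hkey (m+1) le_rfl
        rw [if_pos (by omega : u < m+1), if_pos (by omega : m < m+1)] at h2
        omega
      have heven2 : Even (∑ i ∈ range (m+1), d2 i) := by
        obtain ⟨c, hc⟩ := heven
        exact ⟨c - 1, by omega⟩
      obtain ⟨G2, hdeg2⟩ := ih (m+1) d2 (by omega) hmono2 heven2 hEG2
      -- bump degrees at u and m
      have hu1 : u < m + 1 := by omega
      set uu : Fin (m+1) := ⟨u, hu1⟩ with huu
      set vv : Fin (m+1) := ⟨m, by omega⟩ with hvv
      have hMp : 1 ≤ M := hpos 0 (by omega)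
      have hmp : 1 ≤ d m := hpos m (by omega)
      obtain ⟨G, hGu, hGv, hGo⟩ := bump G2 uu vv
        (by rw [Fin.ne_iff_vne]; exact hum')
        (by
          rw [hdeg2 uu, Fintype.card_fin]
          have : uu.val = u := rfl
          rw [this, hd2u]
          omega)
        (by
          intro x hxu hxv
          rw [hdeg2 x, hdeg2 vv]
          have hxv' : x.val ≠ m := fun h => hxv (Fin.ext h)
          have hxu' : x.val ≠ u := fun h => hxu (Fin.ext h)
          rw [hd2o x.val hxu' hxv']
          have h1 : d m ≤ d x.val := hmono x.val m (by omega) (by omega)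
          have : vv.val = m := rfl
          rw [this, hd2m]
          omega)
      refine ⟨G, fun v => ?_⟩
      by_cases hvu : v = uu
      · subst hvu
        rw [hGu, hdeg2]
        have : uu.val = u := rfl
        rw [this, hd2u, huM]
        omega
      · by_cases hvv' : v = vv
        · subst hvv'
          rw [hGv, hdeg2]
          have : vv.val = m := rfl
          rw [this, hd2m]
          omega
        · rw [hGo v hvu hvv', hdeg2]
          have h1 : v.val ≠ u := fun h => hvu (Fin.ext h)
          have h2 : v.val ≠ m := fun h => hvv' (Fin.ext h)
          rw [hd2o v.val h1 h2]


/-- Erdős–Gallai, sufficiency: a nonincreasing positive sequence with even sum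
satisfying the Erdős–Gallai inequalities is graphic. -/
theorem stmt14 (n : ℕ) (d : ℕ → ℕ)
    (hmono : ∀ i j, i ≤ j → j < n → d j ≤ d i)
    (hpos : ∀ i, i < n → 1 ≤ d i)
    (heven : Even (∑ i ∈ Finset.range n, d i))
    (hEG : ∀ k, 1 ≤ k → k ≤ n →
      ∑ i ∈ Finset.range k, d i ≤ k * (k - 1) + ∑ i ∈ Finset.Ico k n, min (d i) k) :
    ∃ G : SimpleGraph (Fin n), degreeMultiset G = (Finset.range n).val.map d := by
  obtain ⟨G, hG⟩ := realize (2 * (∑ i ∈ Finset.range n, d i) + n) n d le_rfl hmono heven hEG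
  refine ⟨G, ?_⟩
  unfold degreeMultiset
  have h1 : (Finset.univ.val.map fun v => ((G.neighborSet v).ncard))
      = Finset.univ.val.map (fun v : Fin n => d v.val) :=
    Multiset.map_congr rfl (fun v _ => hG v)
  rw [h1]
  have h2 : (Multiset.map (fun v : Fin n => d v.val) (Finset.univ : Finset (Fin n)).val)
      = Multiset.map d (Multiset.map Fin.val (Finset.univ : Finset (Fin n)).val) := by
    rw [Multiset.map_map]; rfl
  rw [h2]
  have h3 : (Multiset.map Fin.val ((Finset.univ : Finset (Fin n)).val)) = (Finset.range n).val := by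
    have h4 : ((Finset.univ : Finset (Fin n)).map Fin.valEmbedding).val = (Finset.range n).val := by
      rw [Fin.map_valEmbedding_univ, Nat.Iio_eq_range]
    rw [Finset.map_val] at h4
    exact h4
  rw [h3]
end

section
/- If D = (d_1, ..., d_n) is the degree sequence of a simple graph, then for every k in {1, ..., n}, Σ_{i=1}^{k} d_i ≤ k(k−1) + Σ_{i=k+1}^{n} min(d_i, k) (Erdős–Gallai, necessity direction). -/
/-- If the multiset of values of `f` on `s` decomposes as `A + B`, then some
subset of `s` realizes `A`. -/
lemma exists_subset_map_eq {V : Type} [DecidableEq V] (f : V → ℕ) :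
    ∀ (A : Multiset ℕ) (s : Finset V) (B : Multiset ℕ),
      Multiset.map f s.val = A + B → ∃ t ⊆ s, Multiset.map f t.val = A := by
  intro A
  induction A using Multiset.induction with
  | empty => intro s B h; exact ⟨∅, Finset.empty_subset _, by simp⟩
  | cons a A ih =>
    intro s B h
    have ha : a ∈ Multiset.map f s.val := by rw [h]; simp
    obtain ⟨v, hv, hfv⟩ := Multiset.mem_map.mp ha
    have hv' : v ∈ s := hv
    have hs : s.val = v ::ₘ (s.erase v).val := by
      rw [Finset.erase_val]; exact (Multiset.cons_erase hv).symm
    have h2 : Multiset.map f (s.erase v).val = A + B := by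
      have key : f v ::ₘ Multiset.map f (s.erase v).val = a ::ₘ (A + B) := by
        rw [← Multiset.map_cons, ← hs, h, Multiset.cons_add]
      rw [hfv] at key
      exact (Multiset.cons_inj_right a).mp key
    obtain ⟨t, hts, ht⟩ := ih (s.erase v) B h2
    have hvt : v ∉ t := fun hmem => (Finset.mem_erase.mp (hts hmem)).1 rfl
    refine ⟨insert v t, ?_, ?_⟩
    · intro x hx
      rcases Finset.mem_insert.mp hx with rfl | hx
      · exact hv'
      · exact Finset.erase_subset _ _ (hts hx)
    · rw [Finset.insert_val_of_notMem hvt, Multiset.map_cons, ht, hfv]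

/-- Erdős–Gallai, necessity: the degree sequence of a simple graph satisfies the
Erdős–Gallai inequalities. -/
theorem stmt15 (n : ℕ) (d : ℕ → ℕ)
    (hmono : ∀ i j, i ≤ j → j < n → d j ≤ d i)
    (G : SimpleGraph (Fin n))
    (hdeg : degreeMultiset G = (Finset.range n).val.map d) :
    ∀ k, 1 ≤ k → k ≤ n →
      ∑ i ∈ Finset.range k, d i ≤ k * (k - 1) + ∑ i ∈ Finset.Ico k n, min (d i) k := by
  classical
  intro k hk1 hkn
  set deg : Fin n → ℕ := fun v => (G.neighborSet v).ncard with hdegdef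
  have hdeg' : Multiset.map deg (Finset.univ : Finset (Fin n)).val
      = (Finset.range n).val.map d := hdeg
  -- expression of deg as a filter cardinality
  have hdeg_card : ∀ v, deg v = (Finset.univ.filter (G.Adj v)).card := by
    intro v
    have h1 : deg v = (G.neighborFinset v).card := by
      simp [hdegdef, SimpleGraph.neighborFinset_def, Set.ncard_eq_toFinset_card']
    rw [h1, SimpleGraph.neighborFinset_eq_filter]
  -- split range n into range k and Ico k n
  have hsplit : (Finset.range n).val.map d
      = (Finset.range k).val.map d + (Finset.Ico k n).val.map d := by
    have hdisj : Disjoint (Finset.range k) (Finset.Ico k n) := by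
      simp only [Finset.disjoint_left, Finset.mem_range, Finset.mem_Ico]
      intro x hx; omega
    have hunion : (Finset.range k).disjUnion (Finset.Ico k n) hdisj = Finset.range n := by
      ext x
      simp only [Finset.mem_disjUnion, Finset.mem_range, Finset.mem_Ico]
      omega
    rw [← hunion]
    exact Multiset.map_add d _ _
  -- choose the subset S realizing the top-k degrees
  obtain ⟨S, hSsub, hS⟩ := exists_subset_map_eq deg ((Finset.range k).val.map d)
    Finset.univ ((Finset.Ico k n).val.map d) (by rw [hdeg', hsplit])
  have hScard : S.card = k := by
    have := congrArg Multiset.card hS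
    simpa using this
  -- the complement realizes the rest
  have hcompl : Multiset.map deg Sᶜ.val = (Finset.Ico k n).val.map d := by
    have huniv : (Finset.univ : Finset (Fin n)).val = S.val + Sᶜ.val := by
      have h : S.disjUnion Sᶜ disjoint_compl_right = Finset.univ := by
        ext x; simp [Finset.mem_disjUnion, em]
      rw [← h]; rfl
    have : Multiset.map deg S.val + Multiset.map deg Sᶜ.val
        = (Finset.range k).val.map d + (Finset.Ico k n).val.map d := by
      rw [← Multiset.map_add, ← huniv, hdeg', hsplit]
    rw [hS] at this
    exact add_left_cancel this
  -- translate sums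
  have hsum1 : ∑ v ∈ S, deg v = ∑ i ∈ Finset.range k, d i := by
    rw [Finset.sum_eq_multiset_sum, hS, ← Finset.sum_eq_multiset_sum]
  have hsum2 : ∑ w ∈ Sᶜ, min (deg w) k = ∑ i ∈ Finset.Ico k n, min (d i) k := by
    rw [Finset.sum_eq_multiset_sum, Finset.sum_eq_multiset_sum]
    have := congrArg (fun M => (Multiset.map (fun x => min x k) M).sum) hcompl
    simpa [Multiset.map_map, Function.comp] using this
  rw [← hsum1, ← hsum2]
  -- main counting inequality
  have hsplitdeg : ∀ v, deg v
      = (∑ w ∈ S, if G.Adj v w then 1 else 0) + ∑ w ∈ Sᶜ, if G.Adj v w then 1 else 0 := by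
    intro v
    rw [hdeg_card v, Finset.card_filter, ← Finset.sum_add_sum_compl S]
  calc ∑ v ∈ S, deg v
      = (∑ v ∈ S, ∑ w ∈ S, if G.Adj v w then 1 else 0)
        + ∑ v ∈ S, ∑ w ∈ Sᶜ, if G.Adj v w then 1 else 0 := by
        rw [← Finset.sum_add_distrib]
        exact Finset.sum_congr rfl fun v _ => hsplitdeg v
    _ ≤ k * (k - 1) + ∑ w ∈ Sᶜ, min (deg w) k := by
        gcongr with hge
        · -- inner part: at most k*(k-1)
          calc ∑ v ∈ S, ∑ w ∈ S, (if G.Adj v w then 1 else 0)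
              ≤ ∑ _v ∈ S, (k - 1) := by
                apply Finset.sum_le_sum
                intro v hv
                rw [← Finset.card_filter]
                have hsub : S.filter (G.Adj v) ⊆ S.erase v := by
                  intro w hw
                  rw [Finset.mem_filter] at hw
                  exact Finset.mem_erase.mpr ⟨hw.2.ne', hw.1⟩
                calc (S.filter (G.Adj v)).card ≤ (S.erase v).card :=
                      Finset.card_le_card hsub
                  _ = k - 1 := by rw [Finset.card_erase_of_mem hv, hScard]
            _ = k * (k - 1) := by rw [Finset.sum_const, hScard, smul_eq_mul]
        · -- boundary part: at most ∑ min (deg w) k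
          rw [Finset.sum_comm]
          apply Finset.sum_le_sum
          intro w _
          rw [← Finset.card_filter]
          apply le_min
          · rw [hdeg_card w]
            apply Finset.card_le_card
            intro v hv
            rw [Finset.mem_filter] at hv
            exact Finset.mem_filter.mpr ⟨Finset.mem_univ _, hv.2.symm⟩
          · calc (S.filter fun v => G.Adj v w).card ≤ S.card :=
                  Finset.card_filter_le _ _
              _ = k := hScard
end
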